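/- arXiv:1204.4747 — 9 statements merged into one kernel-verified Lean document; each statement's English description precedes it below -/
import Mathlib

section
/- Let p be a prime, K a group, H = K ≀ ℤ/p, a ∈ K, τ a nonzero element of ℤ/p, and x = ((a,1,…,1),τ) ∈ H. Then x commutes with diag(y) for every y ∈ Z_K(a), the centralizer of x in H is Z_H(x) = {diag(y)·x^k : y ∈ Z_K(a), 0 ≤ k < p}, and there is a short exact sequence 1 → Z_K(a) → Z_H(x) → ℤ/p → 1, where the first map is y ↦ diag(y) (injective with image Z_H(x) ∩ K^p) and the second map is the restriction of π to Z_H(x) (surjective with kernel {diag(y) : y ∈ Z_K(a)}). -/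
/-! A base-group element `g` commutes with `x = ⟨Pi.mulSingle 0 a, τ⟩` iff
`g (i - τ) = g i` for `i ≠ 0` and `a * g (-τ) = g 0 * a`. Since `τ` generates `ℤ/p`, the
first condition makes `g` constant, and the second then says that its value centralizes `a`.
A general element `h` of the centralizer is brought into the base group by dividing by the
power `x ^ k` with `τ ^ k = π h`, which exists because `ℤ/p` has prime order. -/

/-- The cyclic shift action of `ℤ/p` on `K^p`: the generator `1 ∈ ℤ/p` sends
`(x_1, …, x_p)` to `(x_p, x_1, …, x_{p-1})`. -/
def cycShift (p : ℕ) (K : Type*) [Group K] :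
    Multiplicative (ZMod p) →* MulAut (ZMod p → K) where
  toFun τ :=
    { toFun := fun x i => x (i - Multiplicative.toAdd τ)
      invFun := fun x i => x (i + Multiplicative.toAdd τ)
      left_inv := fun x => funext fun i => by simp
      right_inv := fun x => funext fun i => by simp
      map_mul' := fun x y => rfl }
  map_one' := by
    ext x i
    simp
  map_mul' := fun σ τ => by
    ext x i
    simp [sub_sub]

/-- The wreath product `K ≀ ℤ/p`. -/
abbrev WreathP (p : ℕ) (K : Type*) [Group K] :=
  SemidirectProduct (ZMod p → K) (Multiplicative (ZMod p)) (cycShift p K)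

lemma ZMod.apply_eq_apply_zero_of_apply_sub_eq {p : ℕ} [Fact p.Prime] {α : Type*}
    {f : ZMod p → α} {t : ZMod p} (ht : t ≠ 0) (hf : ∀ i ≠ 0, f (i - t) = f i)
    (i : ZMod p) : f i = f 0 := by
  have hmul : ∀ m < p, f (m * t) = f 0 := by
    intro m
    induction m with
    | zero => simp
    | succ m ih =>
      intro hm
      have hne : ((m + 1 : ℕ) : ZMod p) * t ≠ 0 :=
        mul_ne_zero ((ZMod.natCast_eq_zero_iff _ _).not.mpr
          (Nat.not_dvd_of_pos_of_lt m.succ_pos hm)) ht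
      rw [← hf _ hne, Nat.cast_succ, add_one_mul, add_sub_cancel_right]
      exact ih (m.lt_succ_self.trans hm)
  simpa [mul_assoc, inv_mul_cancel₀ ht] using hmul _ (ZMod.val_lt (i * t⁻¹))

lemma exists_pow_lt_eq_of_prime_card {G : Type*} [Group G] {p : ℕ} [hp : Fact p.Prime]
    (hG : Nat.card G = p) {g : G} (hg : g ≠ 1) (g' : G) : ∃ k < p, g ^ k = g' := by
  obtain ⟨n, rfl⟩ := mem_powers_of_prime_card hG hg (g' := g')
  have hord : orderOf g = p := orderOf_eq_prime (hG ▸ pow_card_eq_one') hg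
  exact ⟨n % p, Nat.mod_lt _ hp.out.pos, by rw [← hord, pow_mod_orderOf]⟩

namespace WreathP

variable {p : ℕ} {K : Type*} [Group K]

lemma cycShift_apply (σ : Multiplicative (ZMod p)) (g : ZMod p → K) (i : ZMod p) :
    cycShift p K σ g i = g (i - Multiplicative.toAdd σ) := rfl

lemma commute_mk_inl_iff (f g : ZMod p → K) (σ : Multiplicative (ZMod p)) :
    Commute (⟨f, σ⟩ : WreathP p K) (SemidirectProduct.inl g) ↔
      f * cycShift p K σ g = g * f := by
  simp [Commute, SemiconjBy, SemidirectProduct.ext_iff]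

lemma commute_mk_mulSingle_inl_const {a y : K} (h : Commute a y) (σ : Multiplicative (ZMod p)) :
    Commute (⟨Pi.mulSingle 0 a, σ⟩ : WreathP p K) (SemidirectProduct.inl fun _ => y) := by
  rw [commute_mk_inl_iff]
  ext i
  by_cases hi : i = 0 <;> simp [cycShift_apply, hi, h.eq]

variable [Fact p.Prime] {a : K} {τ : Multiplicative (ZMod p)}

lemma inl_mem_centralizer_mk_mulSingle_iff (hτ : τ ≠ 1) {g : ZMod p → K} :
    SemidirectProduct.inl g ∈
        Subgroup.centralizer {(⟨Pi.mulSingle 0 a, τ⟩ : WreathP p K)} ↔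
      ∃ y ∈ Subgroup.centralizer ({a} : Set K), g = fun _ => y := by
  rw [Subgroup.mem_centralizer_singleton_iff, eq_comm]
  change Commute _ _ ↔ _
  constructor
  · rw [commute_mk_inl_iff]
    intro hcomm
    have hcoord (i : ZMod p) := congrFun hcomm i
    have hconst : ∀ i, g i = g 0 :=
      ZMod.apply_eq_apply_zero_of_apply_sub_eq (toAdd_eq_zero.not.mpr hτ) fun i hi => by
        simpa [cycShift_apply, hi] using hcoord i
    refine ⟨g 0, ?_, funext hconst⟩
    rw [Subgroup.mem_centralizer_singleton_iff]
    simpa [cycShift_apply, hconst (-Multiplicative.toAdd τ)] using (hcoord 0).symm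
  · rintro ⟨y, hy, rfl⟩
    exact commute_mk_mulSingle_inl_const (Subgroup.mem_centralizer_singleton_iff.mp hy).symm τ

lemma mem_centralizer_mk_mulSingle_and_right_eq_one_iff (hτ : τ ≠ 1) (h : WreathP p K) :
    (h ∈ Subgroup.centralizer {(⟨Pi.mulSingle 0 a, τ⟩ : WreathP p K)} ∧ h.right = 1) ↔
      ∃ y ∈ Subgroup.centralizer ({a} : Set K), h = SemidirectProduct.inl fun _ => y := by
  constructor
  · rintro ⟨hh, hr⟩
    have hinl : h = SemidirectProduct.inl h.left := SemidirectProduct.ext rfl hr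
    rw [hinl] at hh
    obtain ⟨y, hy, hg⟩ := (inl_mem_centralizer_mk_mulSingle_iff hτ).mp hh
    exact ⟨y, hy, by rw [hinl, hg]⟩
  · rintro ⟨y, hy, rfl⟩
    exact ⟨(inl_mem_centralizer_mk_mulSingle_iff hτ).mpr ⟨y, hy, rfl⟩, rfl⟩

lemma mem_centralizer_mk_mulSingle_iff (hτ : τ ≠ 1) (h : WreathP p K) :
    h ∈ Subgroup.centralizer {(⟨Pi.mulSingle 0 a, τ⟩ : WreathP p K)} ↔
      ∃ y ∈ Subgroup.centralizer ({a} : Set K), ∃ k < p,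
        h = SemidirectProduct.inl (fun _ => y) *
          (⟨Pi.mulSingle 0 a, τ⟩ : WreathP p K) ^ k := by
  set x : WreathP p K := ⟨Pi.mulSingle 0 a, τ⟩
  have hx : x ∈ Subgroup.centralizer {x} := Subgroup.mem_centralizer_singleton_iff.mpr rfl
  constructor
  · intro hh
    obtain ⟨k, hk, hτk⟩ := exists_pow_lt_eq_of_prime_card
      (G := Multiplicative (ZMod p)) (Nat.card_zmod p) hτ h.right
    have hright : (h * (x ^ k)⁻¹).right = 1 := by
      change SemidirectProduct.rightHom (h * (x ^ k)⁻¹) = 1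
      rw [map_mul, map_inv, map_pow]
      exact mul_inv_eq_one.mpr hτk.symm
    obtain ⟨y, hy, hyh⟩ := (mem_centralizer_mk_mulSingle_and_right_eq_one_iff hτ _).mp
      ⟨mul_mem hh (inv_mem (pow_mem hx k)), hright⟩
    exact ⟨y, hy, k, hk, by rw [← hyh, inv_mul_cancel_right]⟩
  · rintro ⟨y, hy, k, -, rfl⟩
    exact mul_mem ((mem_centralizer_mk_mulSingle_and_right_eq_one_iff hτ _).mpr ⟨y, hy, rfl⟩).1
      (pow_mem hx k)

end WreathP

/-- Let `p` be a prime, `K` a group, `H = K ≀ ℤ/p`, `a ∈ K`, `τ` a nonzero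
element of `ℤ/p`, and `x = ((a,1,…,1),τ) ∈ H`.  Then `x` commutes with `diag(y)` for
every `y ∈ Z_K(a)`, the centralizer of `x` in `H` is
`Z_H(x) = {diag(y)·x^k : y ∈ Z_K(a), 0 ≤ k < p}`, and there is a short exact sequence
`1 → Z_K(a) → Z_H(x) → ℤ/p → 1` where the first map is `y ↦ diag(y)` (injective, with
image `Z_H(x) ∩ K^p`) and the second is the restriction of `π` to `Z_H(x)` (surjective,
with kernel `{diag(y) : y ∈ Z_K(a)}`). -/
theorem centralizer_structure_of_generator
    (p : ℕ) (hp : p.Prime) (K : Type*) [Group K] (a : K)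
    (τ : Multiplicative (ZMod p)) (hτ : τ ≠ 1) :
    -- `x` commutes with `diag(y)` for every `y ∈ Z_K(a)`
    (∀ y ∈ Subgroup.centralizer ({a} : Set K),
      Commute (⟨Pi.mulSingle (0 : ZMod p) a, τ⟩ : WreathP p K)
        (SemidirectProduct.inl fun _ => y)) ∧
    -- `Z_H(x) = {diag(y)·x^k : y ∈ Z_K(a), 0 ≤ k < p}`
    (∀ h : WreathP p K,
      h ∈ Subgroup.centralizer {(⟨Pi.mulSingle (0 : ZMod p) a, τ⟩ : WreathP p K)} ↔
        ∃ y ∈ Subgroup.centralizer ({a} : Set K), ∃ k : ℕ, k < p ∧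
          h = SemidirectProduct.inl (fun _ => y) *
            (⟨Pi.mulSingle (0 : ZMod p) a, τ⟩ : WreathP p K) ^ k) ∧
    -- `y ↦ diag(y)` is injective
    (Function.Injective fun y : K => (SemidirectProduct.inl fun _ => y : WreathP p K)) ∧
    -- its image, restricted to `Z_K(a)`, is exactly `Z_H(x) ∩ K^p`,
    -- which is also the kernel of `π` restricted to `Z_H(x)`
    (∀ h : WreathP p K,
      (h ∈ Subgroup.centralizer {(⟨Pi.mulSingle (0 : ZMod p) a, τ⟩ : WreathP p K)} ∧
          h.right = 1) ↔
        ∃ y ∈ Subgroup.centralizer ({a} : Set K),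
          h = SemidirectProduct.inl fun _ => y) ∧
    -- `π` restricted to `Z_H(x)` is surjective onto `ℤ/p`
    (∀ σ : Multiplicative (ZMod p),
      ∃ h ∈ Subgroup.centralizer {(⟨Pi.mulSingle (0 : ZMod p) a, τ⟩ : WreathP p K)},
        SemidirectProduct.rightHom h = σ) := by
  have := Fact.mk hp
  have hx : (⟨Pi.mulSingle 0 a, τ⟩ : WreathP p K) ∈
      Subgroup.centralizer {(⟨Pi.mulSingle 0 a, τ⟩ : WreathP p K)} :=
    Subgroup.mem_centralizer_singleton_iff.mpr rfl
  refine ⟨fun y hy => WreathP.commute_mk_mulSingle_inl_const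
      (Subgroup.mem_centralizer_singleton_iff.mp hy).symm τ,
    WreathP.mem_centralizer_mk_mulSingle_iff hτ,
    SemidirectProduct.inl_injective.comp Function.const_injective,
    WreathP.mem_centralizer_mk_mulSingle_and_right_eq_one_iff hτ, fun σ => ?_⟩
  obtain ⟨k, -, hk⟩ := exists_pow_lt_eq_of_prime_card
    (G := Multiplicative (ZMod p)) (Nat.card_zmod p) hτ σ
  exact ⟨_ ^ k, pow_mem hx k, by rw [map_pow]; exact hk⟩
end

section
/- Let p be a prime, K a group, H = K ≀ ℤ/p, and let x = ((x_1,…,x_p),0) be an element of the subgroup K^p of H. If some element of the centralizer Z_H(x) has nonzero image under the projection π : H → ℤ/p, then there exist c ∈ K^p and x' ∈ K such that c x c⁻¹ = diag(x'), i.e. x is conjugate by an element of K^p to a diagonal element. -/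
section ConjugateValues

variable {A G : Type*} [AddGroup A] [Group G] {f : A → G} {t : A}

theorem isConj_apply_sub_nsmul (hf : ∀ i, IsConj (f i) (f (i - t))) (i : A) (n : ℕ) :
    IsConj (f i) (f (i - n • t)) := by
  induction n with
  | zero => simpa using IsConj.refl (f i)
  | succ n ih =>
    rw [succ_nsmul', sub_add_eq_sub_sub_swap]
    exact ih.trans (hf _)

end ConjugateValues

theorem ZMod.exists_nsmul_eq_of_ne_zero {p : ℕ} [Fact p.Prime] {t : ZMod p} (ht : t ≠ 0)
    (j : ZMod p) : ∃ n : ℕ, n • t = j :=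
  ⟨(j * t⁻¹).val, by rw [nsmul_eq_mul, ZMod.natCast_zmod_val, inv_mul_cancel_right₀ ht]⟩

theorem cycShift_apply {p : ℕ} {K : Type*} [Group K] (τ : Multiplicative (ZMod p))
    (x : ZMod p → K) (i : ZMod p) : cycShift p K τ x i = x (i - Multiplicative.toAdd τ) :=
  rfl

namespace WreathP

open SemidirectProduct

variable {p : ℕ} {K : Type*} [Group K]

theorem isConj_apply_sub_of_commute {f : ZMod p → K} {h : WreathP p K}
    (hc : Commute (inl f) h) (i : ZMod p) :
    IsConj (f i) (f (i - Multiplicative.toAdd h.right)) := by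
  have hi := congrFun (congrArg left hc.eq) i
  simp only [mul_left, left_inl, right_inl, map_one, MulAut.one_apply, Pi.mul_apply,
    cycShift_apply] at hi
  exact isConj_iff.mpr ⟨(h.left i)⁻¹, by rw [inv_inv, mul_assoc, hi, inv_mul_cancel_left]⟩

theorem inl_conj_eq_diag {f c : ZMod p → K} {x' : K} (hc : ∀ i, c i * f i * (c i)⁻¹ = x') :
    (inl c * inl f * (inl c)⁻¹ : WreathP p K) = inl fun _ => x' := by
  rw [← map_inv, ← map_mul, ← map_mul]
  exact congrArg inl (funext hc)

end WreathP

/-- Let `p` be a prime, `K` a group, `H = K ≀ ℤ/p`, and let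
`x = ((x_1,…,x_p),0)` be an element of the subgroup `K^p` of `H`.  If some element of
the centralizer `Z_H(x)` has nonzero image under the projection `π : H → ℤ/p`, then
there exist `c ∈ K^p` and `x' ∈ K` such that `c x c⁻¹ = diag(x')`. -/
theorem conj_to_diagonal_of_centralizer_surjects
    (p : ℕ) (hp : p.Prime) (K : Type*) [Group K] (f : ZMod p → K)
    (hx : ∃ h ∈ Subgroup.centralizer {(SemidirectProduct.inl f : WreathP p K)},
      SemidirectProduct.rightHom h ≠ 1) :
    ∃ (c : ZMod p → K) (x' : K),
      SemidirectProduct.inl c * SemidirectProduct.inl f * (SemidirectProduct.inl c)⁻¹ =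
        (SemidirectProduct.inl (fun _ => x') : WreathP p K) := by
  have : Fact p.Prime := ⟨hp⟩
  obtain ⟨h, hcent, hright⟩ := hx
  have hcomm : Commute (SemidirectProduct.inl f) h := Subgroup.mem_centralizer_iff.mp hcent _ rfl
  have ht : Multiplicative.toAdd h.right ≠ 0 := hright
  have hconj (i : ZMod p) : IsConj (f i) (f 0) := by
    obtain ⟨n, hn⟩ := ZMod.exists_nsmul_eq_of_ne_zero ht i
    simpa [hn] using isConj_apply_sub_nsmul (WreathP.isConj_apply_sub_of_commute hcomm) i n
  choose c hc using fun i => isConj_iff.mp (hconj i)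
  exact ⟨c, f 0, WreathP.inl_conj_eq_diag hc⟩
end

section
/- Let p be a prime, K a group, H = K ≀ ℤ/p, and x' ∈ K. Then the centralizer in H of the diagonal element diag(x') equals the wreath product of the centralizer: Z_H(diag(x')) = {((y_1,…,y_p),τ) : y_i ∈ Z_K(x') for all i, τ ∈ ℤ/p} = Z_K(x') ≀ ℤ/p. -/
theorem SemidirectProduct.commute_inl_iff_of_fixed {N G : Type*} [Group N] [Group G]
    {φ : G →* MulAut N} {n : N} (hn : ∀ g, φ g n = n) (h : N ⋊[φ] G) :
    Commute (inl n) h ↔ Commute n h.left := by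
  simp only [commute_iff_eq, SemidirectProduct.ext_iff, mul_left, mul_right, left_inl, right_inl,
    map_one, MulAut.one_apply, hn, one_mul, mul_one, and_true]

theorem cycShift_apply_const (p : ℕ) (K : Type*) [Group K] (τ : Multiplicative (ZMod p)) (a : K) :
    cycShift p K τ (fun _ => a) = fun _ => a :=
  rfl

theorem centralizer_diag_eq_wreath_general
    (p : ℕ) (K : Type*) [Group K] (x' : K) :
    ∀ h : WreathP p K,
      h ∈ Subgroup.centralizer {(SemidirectProduct.inl (fun _ => x') : WreathP p K)} ↔
        ∀ i : ZMod p, h.left i ∈ Subgroup.centralizer {x'} := by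
  intro h
  simp only [Subgroup.mem_centralizer_singleton_iff, ← commute_iff_eq]
  rw [Commute.symm_iff, SemidirectProduct.commute_inl_iff_of_fixed
    (cycShift_apply_const p K · x') h, Pi.commute_iff]
  exact forall_congr' fun _ => Commute.symm_iff

/-- Let `p` be a prime, `K` a group, `H = K ≀ ℤ/p`, and `x' ∈ K`.  Then
the centralizer in `H` of the diagonal element `diag(x')` equals the wreath product
`Z_K(x') ≀ ℤ/p = {((y_1,…,y_p),τ) : y_i ∈ Z_K(x') for all i, τ ∈ ℤ/p}`. -/
theorem centralizer_diag_eq_wreath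
    (p : ℕ) (hp : p.Prime) (K : Type*) [Group K] (x' : K) :
    ∀ h : WreathP p K,
      h ∈ Subgroup.centralizer {(SemidirectProduct.inl (fun _ => x') : WreathP p K)} ↔
        ∀ i : ZMod p, h.left i ∈ Subgroup.centralizer {x'} :=
  centralizer_diag_eq_wreath_general p K x'
end

section
/- Let p be a prime, K a group, and let A be an abelian subgroup of H = K ≀ ℤ/p whose image under the projection π : H → ℤ/p is nontrivial. Then there exist c ∈ K^p and an abelian subgroup B of K such that c A c⁻¹ is contained in the subgroup B ≀ ℤ/p = {((y_1,…,y_p),τ) : y_i ∈ B for all i, τ ∈ ℤ/p} of H. -/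
namespace ZMod

variable {n : ℕ} [NeZero n]

theorem val_add_one_of_add_one_ne_zero {j : ZMod n} (h : j + 1 ≠ 0) :
    (j + 1).val = j.val + 1 := by
  have hcast : ((j.val + 1 : ℕ) : ZMod n) = j + 1 := by rw [Nat.cast_succ, natCast_zmod_val]
  have hlt : j.val + 1 < n := by
    refine (Nat.succ_le_of_lt j.val_lt).lt_of_ne fun hn => h ?_
    rw [← hcast, show j.val + 1 = n from hn, natCast_self]
  rw [← hcast, val_cast_of_lt hlt]

theorem exists_mul_eq_apply_add_one {K : Type*} [Monoid K] (y : ZMod n → K) :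
    ∃ c : ZMod n → K, ∀ j, j + 1 ≠ 0 → c j * y j = c (j + 1) := by
  refine ⟨fun j => ((List.range j.val).map fun k : ℕ => y k).prod, fun j hj => ?_⟩
  simp only [val_add_one_of_add_one_ne_zero hj, List.prod_range_succ, natCast_zmod_val]

theorem apply_eq_apply_zero_of_forall_add_one {α : Type*} (f : ZMod n → α)
    (hf : ∀ j, j + 1 ≠ 0 → f (j + 1) = f j) (j : ZMod n) : f j = f 0 := by
  have hnat : ∀ k < n, f k = f 0 := by
    intro k
    induction k with
    | zero => simp
    | succ k ih =>
      intro hk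
      have hne : (k : ZMod n) + 1 ≠ 0 := by
        rw [← Nat.cast_succ, Ne, natCast_eq_zero_iff]
        exact fun hdvd => (Nat.le_of_dvd k.succ_pos hdvd).not_gt hk
      rw [Nat.cast_succ, hf _ hne, ih (by omega)]
  rw [← natCast_zmod_val j, hnat _ j.val_lt]

variable {p : ℕ} [Fact p.Prime] {τ : ZMod p}

theorem exists_nsmul_eq (hτ : τ ≠ 0) (σ : ZMod p) : ∃ m : ℕ, m • τ = σ :=
  ⟨(σ * τ⁻¹).val, by rw [nsmul_eq_mul, natCast_zmod_val, inv_mul_cancel_right₀ hτ]⟩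

/- The next two lemmas reindex `ℤ/p` by `j ↦ -(j + 1) * τ`, which turns the step `i ↦ i - τ`
into `j ↦ j + 1` and the excluded point `i = 0` into `j = -1`. -/

theorem exists_mul_eq_apply_sub {K : Type*} [Monoid K] (hτ : τ ≠ 0) (x : ZMod p → K) :
    ∃ c : ZMod p → K, ∀ i ≠ 0, c i * x i = c (i - τ) := by
  obtain ⟨c, hc⟩ := exists_mul_eq_apply_add_one fun j => x (-(j + 1) * τ)
  refine ⟨fun i => c (-i * τ⁻¹ - 1), fun i hi => ?_⟩
  have := hc (-i * τ⁻¹ - 1) (by field_simp; simpa using ⟨hi, hτ⟩)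
  convert this using 3 <;> field_simp <;> ring

theorem apply_eq_of_forall_apply_sub {α : Type*} (hτ : τ ≠ 0) (f : ZMod p → α)
    (hf : ∀ i ≠ 0, f (i - τ) = f i) (i j : ZMod p) : f i = f j := by
  have key := apply_eq_apply_zero_of_forall_add_one (fun k => f (-(k + 1) * τ)) fun k hk => by
    convert hf (-(k + 1) * τ) (mul_ne_zero (neg_ne_zero.2 hk) hτ) using 2; ring
  have hf_eq : ∀ i, f i = f (-τ) := fun i => by
    convert key (-i * τ⁻¹ - 1) using 2 <;> field_simp <;> ring
  rw [hf_eq i, hf_eq j]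

end ZMod

namespace WreathP

open SemidirectProduct

variable {p : ℕ} {K : Type*} [Group K]

theorem mul_left_apply (g h : WreathP p K) (i : ZMod p) :
    (g * h).left i = g.left i * h.left (i - g.right.toAdd) := rfl

theorem mul_left_apply_of_right_eq_one {g : WreathP p K} (hg : g.right = 1) (h : WreathP p K)
    (i : ZMod p) : (g * h).left i = g.left i * h.left i := by
  simp [mul_left_apply, hg]

theorem conj_inl_right (c : ZMod p → K) (g : WreathP p K) :
    (inl c * g * (inl c)⁻¹).right = g.right := by
  simp

theorem conj_inl_left_apply (c : ZMod p → K) (g : WreathP p K) (i : ZMod p) :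
    (inl c * g * (inl c)⁻¹).left i = c i * g.left i * (c (i - g.right.toAdd))⁻¹ := by
  simp [mul_left_apply]

theorem exists_conj_inl_left_eq_one [Fact p.Prime] {g : WreathP p K} (hg : g.right ≠ 1) :
    ∃ c : ZMod p → K, ∀ i ≠ 0, (inl c * g * (inl c)⁻¹).left i = 1 := by
  obtain ⟨c, hc⟩ := ZMod.exists_mul_eq_apply_sub (toAdd_eq_zero.not.2 hg) g.left
  exact ⟨c, fun i hi => by rw [conj_inl_left_apply, hc i hi, mul_inv_cancel]⟩

variable {g h : WreathP p K}

theorem pow_left_apply_mem_zpowers (hsupp : ∀ i ≠ 0, g.left i = 1) (m : ℕ) (i : ZMod p) :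
    (g ^ m).left i ∈ Subgroup.zpowers (g.left 0) := by
  induction m generalizing i with
  | zero => exact Subgroup.one_mem _
  | succ m ih =>
    rw [pow_succ', mul_left_apply]
    refine Subgroup.mul_mem _ ?_ (ih _)
    obtain rfl | hi := eq_or_ne i 0
    · exact Subgroup.mem_zpowers _
    · rw [hsupp i hi]
      exact Subgroup.one_mem _

theorem left_apply_mul_eq_of_commute (hh : h.right = 1) (hcomm : Commute h g) (i : ZMod p) :
    h.left i * g.left i = g.left i * h.left (i - g.right.toAdd) := by
  simpa only [mul_left_apply_of_right_eq_one hh, mul_left_apply] using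
    congrArg (fun x : WreathP p K => x.left i) hcomm.eq

theorem left_apply_eq_left_zero_of_commute [Fact p.Prime] (hsupp : ∀ i ≠ 0, g.left i = 1)
    (hg : g.right ≠ 1) (hh : h.right = 1) (hcomm : Commute h g) (i : ZMod p) :
    h.left i = h.left 0 :=
  ZMod.apply_eq_of_forall_apply_sub (toAdd_eq_zero.not.2 hg) h.left
    (fun j hj => by simpa [hsupp j hj] using (left_apply_mul_eq_of_commute hh hcomm j).symm) i 0

theorem commute_left_zero_of_commute [Fact p.Prime] (hsupp : ∀ i ≠ 0, g.left i = 1)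
    (hg : g.right ≠ 1) (hh : h.right = 1) (hcomm : Commute h g) :
    Commute (h.left 0) (g.left 0) := by
  have h0 := left_apply_mul_eq_of_commute hh hcomm 0
  rwa [left_apply_eq_left_zero_of_commute hsupp hg hh hcomm (0 - g.right.toAdd)] at h0

theorem exists_left_mem_of_commute [Fact p.Prime] (hsupp : ∀ i ≠ 0, g.left i = 1)
    (hg : g.right ≠ 1) {A : Subgroup (WreathP p K)} (hA : ∀ x ∈ A, ∀ y ∈ A, x * y = y * x)
    (hgA : g ∈ A) :
    ∃ B : Subgroup K, (∀ x ∈ B, ∀ y ∈ B, x * y = y * x) ∧ ∀ h ∈ A, ∀ i, h.left i ∈ B := by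
  set S : Set K := insert (g.left 0) {z | ∃ h ∈ A, h.right = 1 ∧ h.left 0 = z}
  have hS : ∀ x ∈ S, ∀ y ∈ S, x * y = y * x := by
    rintro _ (rfl | ⟨h, hhA, hh, rfl⟩) _ (rfl | ⟨h', hh'A, hh', rfl⟩)
    · rfl
    · exact (commute_left_zero_of_commute hsupp hg hh' (hA h' hh'A g hgA)).symm
    · exact commute_left_zero_of_commute hsupp hg hh (hA h hhA g hgA)
    · simpa [hh'] using left_apply_mul_eq_of_commute hh (hA h hhA h' hh'A) 0
  have := Subgroup.isMulCommutative_closure hS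
  refine ⟨Subgroup.closure S, fun x hx y hy => setLike_mul_comm hx hy, fun h hhA i => ?_⟩
  obtain ⟨m, hm⟩ := ZMod.exists_nsmul_eq (toAdd_eq_zero.not.2 hg) h.right.toAdd
  have hpow : (g ^ m).right = h.right := by
    change rightHom (g ^ m) = _
    rw [map_pow]
    exact hm
  set h' := h * (g ^ m)⁻¹
  have hh'A : h' ∈ A := A.mul_mem hhA (A.inv_mem (A.pow_mem hgA m))
  have hh' : h'.right = 1 := by simp [h', hpow]
  have hdecomp : h.left i = h'.left 0 * (g ^ m).left i := calc
    h.left i = (h' * g ^ m).left i := by rw [inv_mul_cancel_right]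
    _ = h'.left i * (g ^ m).left i := mul_left_apply_of_right_eq_one hh' _ _
    _ = h'.left 0 * (g ^ m).left i := by
      rw [left_apply_eq_left_zero_of_commute hsupp hg hh' (hA h' hh'A g hgA) i]
  rw [hdecomp]
  exact Subgroup.mul_mem _ (Subgroup.subset_closure (Or.inr ⟨h', hh'A, hh', rfl⟩))
    (Subgroup.zpowers_le.2 (Subgroup.subset_closure (Set.mem_insert _ _))
      (pow_left_apply_mem_zpowers hsupp m i))

end WreathP

/-- Let `p` be a prime, `K` a group, and let `A` be an abelian subgroup of
`H = K ≀ ℤ/p` whose image under the projection `π : H → ℤ/p` is nontrivial.  Then there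
exist `c ∈ K^p` and an abelian subgroup `B` of `K` such that `c A c⁻¹` is contained in
the subgroup `B ≀ ℤ/p = {((y_1,…,y_p),τ) : y_i ∈ B for all i, τ ∈ ℤ/p}` of `H`. -/
theorem abelian_subgroup_conj_into_wreath
    (p : ℕ) (hp : p.Prime) (K : Type*) [Group K] (A : Subgroup (WreathP p K))
    (hA : ∀ x ∈ A, ∀ y ∈ A, x * y = y * x)
    (hsur : ∃ g ∈ A, SemidirectProduct.rightHom g ≠ 1) :
    ∃ (c : ZMod p → K) (B : Subgroup K),
      (∀ x ∈ B, ∀ y ∈ B, x * y = y * x) ∧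
      ∀ g ∈ A, ∀ i : ZMod p,
        (SemidirectProduct.inl c * g * (SemidirectProduct.inl c)⁻¹).left i ∈ B := by
  have : Fact p.Prime := ⟨hp⟩
  obtain ⟨g, hgA, hg⟩ := hsur
  obtain ⟨c, hc⟩ := WreathP.exists_conj_inl_left_eq_one hg
  set conj := (MulAut.conj (SemidirectProduct.inl c : WreathP p K)).toMonoidHom
  have hconjA : ∀ x ∈ A.map conj, ∀ y ∈ A.map conj, x * y = y * x := by
    rintro _ ⟨x, hx, rfl⟩ _ ⟨y, hy, rfl⟩
    rw [← map_mul, hA x hx y hy, map_mul]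
  obtain ⟨B, hB, hAB⟩ := WreathP.exists_left_mem_of_commute hc
    (by rwa [WreathP.conj_inl_right]) hconjA (Subgroup.mem_map_of_mem conj hgA)
  exact ⟨c, B, hB, fun h hhA => hAB _ (Subgroup.mem_map_of_mem conj hhA)⟩
end

section
/- Let G1 and G2 be finite isoclinic groups. Then there exist a natural number r, a group Ĝ, a central subgroup T of Ĝ isomorphic to (ℂˣ)^r (the r-fold direct product of the multiplicative group of nonzero complex numbers), and injective group homomorphisms φ1 : G1 → Ĝ and φ2 : G2 → Ĝ such that Ĝ = T·φ1(G1) = T·φ2(G2) and φ_k(G_k) ∩ T = φ_k(Z(G_k)) for k = 1, 2. In other words, G1 and G2 embed as subgroups of a common central extension of their common central quotient by an algebraic torus (they are toroidally related). -/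
/-!
Let `(i, j)` be an isoclinism and `P ≤ G₁ × G₂` the fibre product over `G₁/Z₁ ≅ G₂/Z₂`. The
projections `P → Gₖ` are onto, with kernels `1 × Z₂` and `Z₁ × 1`, and `[P, P]` is the graph of
`j`, so it meets both kernels trivially. Embed `Z₁ × Z₂` into a torus `T₁ × T₂` by characters and
let `Ĝ` be the pushout of `T₁ × T₂ ⊇ Z₁ × Z₂ ⊆ P`, a central extension. As `ℂˣ` is divisible, the
character of `Z₂` extends over `P^ab ⊇ 1 × Z₂` to some `χ₂ : P → T₂`; twisting `P → Ĝ` by `χ₂⁻¹`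
kills exactly `1 × Z₂`, so it descends to an embedding of `G₁ = P/(1 × Z₂)`, and symmetrically
for `G₂`.
-/
open scoped commutatorElement

/-- Two groups `G₁`, `G₂` with centers `Z₁`, `Z₂` are *isoclinic* if there are
isomorphisms `i : G₁/Z₁ ≃ G₂/Z₂` and `j : [G₁,G₁] ≃ [G₂,G₂]` compatible with the
commutator maps: whenever `x'Z₂ = i(xZ₁)` and `y'Z₂ = i(yZ₁)` one has
`j([x,y]) = [x',y']`. -/
def IsIsoclinic (G₁ G₂ : Type*) [Group G₁] [Group G₂] : Prop :=
  ∃ (i : (G₁ ⧸ Subgroup.center G₁) ≃* (G₂ ⧸ Subgroup.center G₂))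
    (j : commutator G₁ ≃* commutator G₂),
    ∀ (x y : G₁) (x' y' : G₂),
      (QuotientGroup.mk x' : G₂ ⧸ Subgroup.center G₂) = i (QuotientGroup.mk x) →
      (QuotientGroup.mk y' : G₂ ⧸ Subgroup.center G₂) = i (QuotientGroup.mk y) →
      (j ⟨⁅x, y⁆, Subgroup.commutator_mem_commutator (Subgroup.mem_top x)
          (Subgroup.mem_top y)⟩ : G₂) = ⁅x', y'⁆

/-- A witness that `G₁` and `G₂` are *toroidally related*: both embed into a common
group `Ghat` which is a central extension by an algebraic torus `T ≅ (ℂˣ)^r`, in such a way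
that `Ghat = T·G₁ = T·G₂` and `G_k ∩ T = Z(G_k)` for `k = 1, 2`. -/
structure ToroidalWitness (G₁ G₂ : Type*) [Group G₁] [Group G₂] where
  /-- the rank of the torus -/
  r : ℕ
  /-- the ambient group -/
  Ghat : Type
  [grp : Group Ghat]
  /-- the torus, a central subgroup of `Ghat` -/
  T : Subgroup Ghat
  T_central : T ≤ Subgroup.center Ghat
  /-- the torus is isomorphic to `(ℂˣ)^r` -/
  T_torus : T ≃* (Fin r → ℂˣ)
  /-- the embedding of `G₁` -/
  φ₁ : G₁ →* Ghat
  φ₁_inj : Function.Injective φ₁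
  /-- the embedding of `G₂` -/
  φ₂ : G₂ →* Ghat
  φ₂_inj : Function.Injective φ₂
  /-- `Ghat = T·φ₁(G₁)` -/
  cover₁ : ∀ g : Ghat, ∃ t ∈ T, ∃ g₁ : G₁, g = t * φ₁ g₁
  /-- `Ghat = T·φ₂(G₂)` -/
  cover₂ : ∀ g : Ghat, ∃ t ∈ T, ∃ g₂ : G₂, g = t * φ₂ g₂
  /-- `φ₁(G₁) ∩ T = φ₁(Z(G₁))` -/
  inter₁ : Set.range φ₁ ∩ (T : Set Ghat) = φ₁ '' (Subgroup.center G₁ : Set G₁)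
  /-- `φ₂(G₂) ∩ T = φ₂(Z(G₂))` -/
  inter₂ : Set.range φ₂ ∩ (T : Set Ghat) = φ₂ '' (Subgroup.center G₂ : Set G₂)

open Subgroup

instance Subgroup.center.commGroup {G : Type*} [Group G] : CommGroup (center G) :=
  { mul_comm := mul_comm' }

noncomputable instance IsAlgClosed.rootableByNatUnits (K : Type*) [Field K] [IsAlgClosed K] :
    RootableBy Kˣ ℕ :=
  rootableByOfPowLeftSurj _ _ fun {n} hn a => by
    obtain ⟨z, hz⟩ := IsAlgClosed.exists_pow_nat_eq (a : K) (Nat.pos_of_ne_zero hn)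
    have hz0 : z ≠ 0 := by
      rintro rfl
      exact a.ne_zero (by rw [← hz, zero_pow hn])
    exact ⟨Units.mk0 z hz0, Units.ext (by simp [hz])⟩

noncomputable instance IsAlgClosed.rootableByIntUnits (K : Type*) [Field K] [IsAlgClosed K] :
    RootableBy Kˣ ℤ :=
  Group.rootableByIntOfRootableByNat _

noncomputable instance Additive.divisibleByInt {A : Type*} [CommGroup A] [RootableBy A ℤ] :
    DivisibleBy (Additive A) ℤ where
  div a n := .ofMul (RootableBy.root a.toMul n)
  div_zero a := by simp [RootableBy.root_zero]
  div_cancel a hn := congrArg Additive.ofMul (RootableBy.root_cancel a.toMul hn)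

/-- Rootable commutative groups are injective `ℤ`-modules (Baer's criterion). -/
theorem MonoidHom.exists_comp_eq_of_injective {X C A : Type*} [CommGroup X] [CommGroup C]
    [CommGroup A] [RootableBy A ℤ] {u : X →* C} (hu : Function.Injective u) (g : X →* A) :
    ∃ χ : C →* A, χ.comp u = g := by
  obtain ⟨h, hh⟩ := (Module.Baer.of_divisible (Additive A)).extension_property_addMonoidHom
    (MonoidHom.toAdditive u) hu (MonoidHom.toAdditive g)
  exact ⟨MonoidHom.toAdditive.symm h, MonoidHom.ext fun x => DFunLike.congr_fun hh x⟩

/-- The characters of a finite abelian group separate its points. -/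
theorem exists_injective_monoidHom_pi_units_complex (Z : Type*) [CommGroup Z] [Finite Z] :
    ∃ (r : ℕ) (f : Z →* (Fin r → ℂˣ)), Function.Injective f := by
  have : NeZero ((Monoid.exponent Z : ℕ) : ℂ) :=
    ⟨Nat.cast_ne_zero.mpr Monoid.exponent_ne_zero_of_finite⟩
  have : Finite (Z →* ℂˣ) := Finite.of_equiv Z
    (CommGroup.monoidHom_mulEquiv_of_hasEnoughRootsOfUnity Z ℂ).some.symm.toEquiv
  let e := Finite.equivFin (Z →* ℂˣ)
  refine ⟨_, MonoidHom.pi fun k => e.symm k, fun a b hab => ?_⟩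
  rw [← CommGroup.forall_apply_eq_apply_iff (G := Z) (M := ℂ)]
  intro φ
  simpa using congrFun hab (e φ)

def MulEquiv.finAppend (M : Type*) [Mul M] (a b : ℕ) :
    (Fin a → M) × (Fin b → M) ≃* (Fin (a + b) → M) :=
  { Fin.appendEquiv a b with
    map_mul' x y := by
      funext k
      refine Fin.addCases (fun k => ?_) (fun k => ?_) k <;> simp }

section

variable {C T P : Type*} [Group C] [CommGroup T] [Group P] (f : C →* T) (ι : C →* center P)

/-- The relations `(f c, 1) = (1, ι c)` gluing `T` and `P` along `C`. -/
def CentralPushout.rel : Subgroup (T × P) := (f⁻¹.prod ((center P).subtype.comp ι)).range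

theorem CentralPushout.rel_le_center : CentralPushout.rel f ι ≤ center (T × P) := by
  rintro _ ⟨c, rfl⟩
  rw [Subgroup.center_prod]
  exact ⟨mem_center_iff.mpr fun _ => mul_comm _ _, (ι c).2⟩

instance : (CentralPushout.rel f ι).Normal where
  conj_mem n hn g := by
    rw [mem_center_iff.mp (CentralPushout.rel_le_center f ι hn) g, mul_inv_cancel_right]
    exact hn

abbrev CentralPushout := (T × P) ⧸ CentralPushout.rel f ι

namespace CentralPushout

def inl : T →* CentralPushout f ι := (QuotientGroup.mk' _).comp (MonoidHom.inl T P)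

def inr : P →* CentralPushout f ι := (QuotientGroup.mk' _).comp (MonoidHom.inr T P)

theorem exists_eq_inl_mul_inr (g : CentralPushout f ι) : ∃ t p, g = inl f ι t * inr f ι p := by
  obtain ⟨⟨t, p⟩, rfl⟩ := QuotientGroup.mk'_surjective _ g
  refine ⟨t, p, ?_⟩
  simp only [inl, inr, MonoidHom.comp_apply, ← map_mul, MonoidHom.inl_apply, MonoidHom.inr_apply,
    Prod.mk_mul_mk, mul_one, one_mul]

theorem inl_mem_center (t : T) : inl f ι t ∈ center (CentralPushout f ι) := by
  refine mem_center_iff.mpr fun g => ?_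
  obtain ⟨s, p, rfl⟩ := exists_eq_inl_mul_inr f ι g
  simp only [inl, inr, MonoidHom.comp_apply, ← map_mul]
  congr 1
  ext <;> simp [mul_comm]

theorem inl_eq_inr_iff {t : T} {p : P} :
    inl f ι t = inr f ι p ↔ ∃ c, f c = t ∧ (ι c : P) = p := by
  simp only [inl, inr, MonoidHom.comp_apply, QuotientGroup.mk'_apply, QuotientGroup.eq]
  refine exists_congr fun c => ?_
  simp [Prod.ext_iff]

theorem inl_injective (hι : Function.Injective ι) : Function.Injective (inl f ι) := by
  refine (injective_iff_map_eq_one _).mpr fun t ht => ?_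
  obtain ⟨c, rfl, hc⟩ := (inl_eq_inr_iff f ι).mp (ht.trans (map_one (inr f ι)).symm)
  have : ι c = ι 1 := by rw [map_one]; exact Subtype.ext hc
  rw [hι this, map_one]

def twist (ψ : P →* T) : P →* CentralPushout f ι :=
  (QuotientGroup.mk' _).comp (ψ⁻¹.prod (MonoidHom.id P))

variable {f ι}

theorem inl_mul_twist (ψ : P →* T) (p : P) : inl f ι (ψ p) * twist f ι ψ p = inr f ι p := by
  simp only [inl, inr, twist, MonoidHom.comp_apply, ← map_mul]
  congr 1
  ext <;> simp

theorem twist_eq_one_iff {ψ : P →* T} {p : P} :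
    twist f ι ψ p = 1 ↔ ∃ c, f c = ψ p ∧ (ι c : P) = p := by
  rw [← inl_eq_inr_iff, ← inl_mul_twist ψ p, left_eq_mul]

theorem twist_mem_range_inl_iff {ψ : P →* T} {p : P} :
    twist f ι ψ p ∈ (inl f ι).range ↔ p ∈ ((center P).subtype.comp ι).range := by
  have : twist f ι ψ p = (inl f ι (ψ p))⁻¹ * inr f ι p := by
    rw [← inl_mul_twist ψ p, inv_mul_cancel_left]
  rw [this, Subgroup.mul_mem_cancel_left _ (inv_mem (MonoidHom.mem_range.mpr ⟨ψ p, rfl⟩))]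
  constructor
  · rintro ⟨t, ht⟩
    obtain ⟨c, -, hc⟩ := (inl_eq_inr_iff f ι).mp ht
    exact ⟨c, hc⟩
  · rintro ⟨c, rfl⟩
    exact ⟨f c, (inl_eq_inr_iff f ι).mpr ⟨c, rfl, rfl⟩⟩

theorem exists_embedding {G : Type*} [Group G] {π : P →* G} (hπ : Function.Surjective π)
    {ψ : P →* T} (hker : (twist f ι ψ).ker = π.ker)
    (hcenter : (center G).comap π = ((center P).subtype.comp ι).range) :
    ∃ φ : G →* CentralPushout f ι, Function.Injective φ ∧
      (∀ g, ∃ t ∈ (inl f ι).range, ∃ x, g = t * φ x) ∧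
      Set.range φ ∩ (inl f ι).range = φ '' center G := by
  set φ := π.liftOfSurjective hπ ⟨twist f ι ψ, hker.ge⟩
  have hφ (p : P) : φ (π p) = twist f ι ψ p := π.liftOfRightInverse_comp_apply _ _ _ p
  refine ⟨φ, (injective_iff_map_eq_one φ).mpr fun x hx => ?_, fun g => ?_, ?_⟩
  · obtain ⟨p, rfl⟩ := hπ x
    rw [hφ] at hx
    rwa [← MonoidHom.mem_ker, ← hker]
  · obtain ⟨t, p, rfl⟩ := exists_eq_inl_mul_inr f ι g
    refine ⟨inl f ι (t * ψ p), ⟨_, rfl⟩, π p, ?_⟩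
    rw [hφ, map_mul, mul_assoc, inl_mul_twist]
  · ext g
    constructor
    · rintro ⟨⟨x, rfl⟩, hx⟩
      obtain ⟨p, rfl⟩ := hπ x
      rw [SetLike.mem_coe, hφ, twist_mem_range_inl_iff, ← hcenter] at hx
      exact ⟨π p, hx, rfl⟩
    · rintro ⟨x, hx, rfl⟩
      obtain ⟨p, rfl⟩ := hπ x
      refine ⟨⟨_, rfl⟩, ?_⟩
      rw [SetLike.mem_coe, hφ, twist_mem_range_inl_iff, ← hcenter]
      exact hx

section Prod

variable {C₁ C₂ T₁ T₂ : Type*} [Group C₁] [Group C₂] [CommGroup T₁] [CommGroup T₂]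
  {f₁ : C₁ →* T₁} {f₂ : C₂ →* T₂} {ι : C₁ × C₂ →* center P}

theorem ker_twist_inr (hf₁ : Function.Injective f₁) {χ : P →* T₂}
    (hχ : ∀ c, χ (ι (1, c)) = f₂ c) :
    (twist (f₁.prodMap f₂) ι ((MonoidHom.inr T₁ T₂).comp χ)).ker =
      ((center P).subtype.comp (ι.comp (MonoidHom.inr C₁ C₂))).range := by
  ext p
  rw [MonoidHom.mem_ker, twist_eq_one_iff]
  constructor
  · rintro ⟨⟨c₁, c₂⟩, hc, rfl⟩
    obtain rfl : c₁ = 1 := hf₁ ((congrArg Prod.fst hc).trans (map_one f₁).symm)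
    exact ⟨c₂, rfl⟩
  · rintro ⟨c, rfl⟩
    exact ⟨(1, c), by simp [hχ], rfl⟩

theorem ker_twist_inl (hf₂ : Function.Injective f₂) {χ : P →* T₁}
    (hχ : ∀ c, χ (ι (c, 1)) = f₁ c) :
    (twist (f₁.prodMap f₂) ι ((MonoidHom.inl T₁ T₂).comp χ)).ker =
      ((center P).subtype.comp (ι.comp (MonoidHom.inl C₁ C₂))).range := by
  ext p
  rw [MonoidHom.mem_ker, twist_eq_one_iff]
  constructor
  · rintro ⟨⟨c₁, c₂⟩, hc, rfl⟩
    obtain rfl : c₂ = 1 := hf₂ ((congrArg Prod.snd hc).trans (map_one f₂).symm)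
    exact ⟨c₁, rfl⟩
  · rintro ⟨c, rfl⟩
    exact ⟨(c, 1), by simp [hχ], rfl⟩

end Prod

end CentralPushout

end

namespace IsIsoclinic

variable {G₁ G₂ : Type*} [Group G₁] [Group G₂] (i : G₁ ⧸ center G₁ ≃* G₂ ⧸ center G₂)

def fiberProd : Subgroup (G₁ × G₂) :=
  ((QuotientGroup.mk' _).comp (MonoidHom.snd G₁ G₂)).eqLocus
    (i.toMonoidHom.comp ((QuotientGroup.mk' _).comp (MonoidHom.fst G₁ G₂)))

variable {i} in
theorem mem_fiberProd {p : G₁ × G₂} :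
    p ∈ fiberProd i ↔ (p.2 : G₂ ⧸ center G₂) = i p.1 :=
  Iff.rfl

variable {i} in
theorem fst_mem_center_iff {p : G₁ × G₂} (hp : p ∈ fiberProd i) :
    p.1 ∈ center G₁ ↔ p.2 ∈ center G₂ := by
  rw [← QuotientGroup.eq_one_iff p.1, ← QuotientGroup.eq_one_iff p.2, mem_fiberProd.mp hp,
    MulEquiv.map_eq_one_iff]

def fst : fiberProd i →* G₁ := (MonoidHom.fst G₁ G₂).comp (fiberProd i).subtype

def snd : fiberProd i →* G₂ := (MonoidHom.snd G₁ G₂).comp (fiberProd i).subtype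

theorem fst_surjective : Function.Surjective (fst i) := fun x => by
  obtain ⟨y, hy⟩ := QuotientGroup.mk_surjective (i x)
  exact ⟨⟨(x, y), hy⟩, rfl⟩

theorem snd_surjective : Function.Surjective (snd i) := fun y => by
  obtain ⟨x, hx⟩ := QuotientGroup.mk_surjective (i.symm y)
  exact ⟨⟨(x, y), mem_fiberProd.mpr (by rw [hx, MulEquiv.apply_symm_apply])⟩, rfl⟩

def centerEmbedding : center G₁ × center G₂ →* center (fiberProd i) where
  toFun z := ⟨⟨(z.1, z.2), mem_fiberProd.mpr <| by
      rw [(QuotientGroup.eq_one_iff _).mpr z.1.2, (QuotientGroup.eq_one_iff _).mpr z.2.2,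
        map_one]⟩,
    mem_center_iff.mpr fun _ =>
      Subtype.ext (Prod.ext (mem_center_iff.mp z.1.2 _) (mem_center_iff.mp z.2.2 _))⟩
  map_one' := rfl
  map_mul' _ _ := rfl

theorem centerEmbedding_injective : Function.Injective (centerEmbedding i) := fun _ _ h =>
  Prod.ext (Subtype.ext (congrArg (fun p : center (fiberProd i) => (p : G₁ × G₂).1) h))
    (Subtype.ext (congrArg (fun p : center (fiberProd i) => (p : G₁ × G₂).2) h))

theorem comap_fst_center :
    (center G₁).comap (fst i) = ((center _).subtype.comp (centerEmbedding i)).range := by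
  ext ⟨⟨x, y⟩, hp⟩
  refine ⟨fun hx => ⟨(⟨x, hx⟩, ⟨y, (fst_mem_center_iff hp).mp hx⟩), rfl⟩, ?_⟩
  rintro ⟨z, hz⟩
  obtain rfl : (z.1 : G₁) = x := congrArg (fun p : fiberProd i => (p : G₁ × G₂).1) hz
  exact z.1.2

theorem comap_snd_center :
    (center G₂).comap (snd i) = ((center _).subtype.comp (centerEmbedding i)).range := by
  ext ⟨⟨x, y⟩, hp⟩
  refine ⟨fun hy => ⟨(⟨x, (fst_mem_center_iff hp).mpr hy⟩, ⟨y, hy⟩), rfl⟩, ?_⟩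
  rintro ⟨z, hz⟩
  obtain rfl : (z.2 : G₂) = y := congrArg (fun p : fiberProd i => (p : G₁ × G₂).2) hz
  exact z.2.2

theorem ker_fst : (fst i).ker =
    ((center _).subtype.comp ((centerEmbedding i).comp (MonoidHom.inr _ _))).range := by
  ext ⟨⟨x, y⟩, hp⟩
  constructor
  · rintro (rfl : x = 1)
    exact ⟨⟨y, (fst_mem_center_iff hp).mp (one_mem _)⟩, rfl⟩
  · rintro ⟨z, hz⟩
    exact (congrArg (fun p : fiberProd i => (p : G₁ × G₂).1) hz).symm

theorem ker_snd : (snd i).ker =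
    ((center _).subtype.comp ((centerEmbedding i).comp (MonoidHom.inl _ _))).range := by
  ext ⟨⟨x, y⟩, hp⟩
  constructor
  · rintro (rfl : y = 1)
    exact ⟨⟨x, (fst_mem_center_iff hp).mpr (one_mem _)⟩, rfl⟩
  · rintro ⟨z, hz⟩
    exact (congrArg (fun p : fiberProd i => (p : G₁ × G₂).2) hz).symm

/-- The condition on `(i, j)` in the definition of `IsIsoclinic`. -/
def IsIsoclinism (j : commutator G₁ ≃* commutator G₂) : Prop :=
  ∀ (x y : G₁) (x' y' : G₂),
    (QuotientGroup.mk x' : G₂ ⧸ center G₂) = i (QuotientGroup.mk x) →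
    (QuotientGroup.mk y' : G₂ ⧸ center G₂) = i (QuotientGroup.mk y) →
    (j ⟨⁅x, y⁆, commutator_mem_commutator (mem_top x) (mem_top y)⟩ : G₂) = ⁅x', y'⁆

variable {i}

/-- The commutator subgroup of `fiberProd i` lies in the graph of `j`. -/
theorem fst_eq_one_iff_snd_eq_one_of_mem_commutator {j : commutator G₁ ≃* commutator G₂}
    (hij : IsIsoclinism i j) {p : fiberProd i} (hp : p ∈ commutator (fiberProd i)) :
    (p : G₁ × G₂).1 = 1 ↔ (p : G₁ × G₂).2 = 1 := by
  let graph : Subgroup (G₁ × G₂) :=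
    ((commutator G₁).subtype.prod ((commutator G₂).subtype.comp j.toMonoidHom)).range
  have : commutator (fiberProd i) ≤ graph.comap (fiberProd i).subtype := by
    rw [commutator_def, commutator_le]
    rintro a - b -
    exact ⟨⟨⁅a.1.1, b.1.1⁆, commutator_mem_commutator (mem_top _) (mem_top _)⟩,
      Prod.ext rfl (hij _ _ _ _ a.2 b.2)⟩
  obtain ⟨c, hc⟩ := this hp
  rw [← (fiberProd i).subtype_apply p, ← hc]
  simp

theorem injective_abelianization_centerEmbedding_inl {j : commutator G₁ ≃* commutator G₂}
    (hij : IsIsoclinism i j) : Function.Injective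
      (Abelianization.of.comp ((center _).subtype.comp ((centerEmbedding i).comp
        (MonoidHom.inl (center G₁) (center G₂))))) := by
  refine (injective_iff_map_eq_one _).mpr fun z hz => Subtype.ext ?_
  rw [MonoidHom.comp_apply, ← MonoidHom.mem_ker, Abelianization.ker_of] at hz
  exact (fst_eq_one_iff_snd_eq_one_of_mem_commutator hij hz).mpr rfl

theorem injective_abelianization_centerEmbedding_inr {j : commutator G₁ ≃* commutator G₂}
    (hij : IsIsoclinism i j) : Function.Injective
      (Abelianization.of.comp ((center _).subtype.comp ((centerEmbedding i).comp
        (MonoidHom.inr (center G₁) (center G₂))))) := by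
  refine (injective_iff_map_eq_one _).mpr fun z hz => Subtype.ext ?_
  rw [MonoidHom.comp_apply, ← MonoidHom.mem_ker, Abelianization.ker_of] at hz
  exact (fst_eq_one_iff_snd_eq_one_of_mem_commutator hij hz).mp rfl

end IsIsoclinic

open IsIsoclinic CentralPushout

/-- finite isoclinic groups are toroidally related: they embed as
subgroups of a common central extension, by an algebraic torus `(ℂˣ)^r`, of their common
central quotient. -/
theorem isoclinic_implies_toroidally_related
    (G₁ G₂ : Type) [Group G₁] [Group G₂] [Finite G₁] [Finite G₂]
    (h : IsIsoclinic G₁ G₂) :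
    Nonempty (ToroidalWitness G₁ G₂) := by
  obtain ⟨i, j, hij⟩ := h
  obtain ⟨r₁, f₁, hf₁⟩ := exists_injective_monoidHom_pi_units_complex (center G₁)
  obtain ⟨r₂, f₂, hf₂⟩ := exists_injective_monoidHom_pi_units_complex (center G₂)
  obtain ⟨χ₁, hχ₁⟩ :=
    MonoidHom.exists_comp_eq_of_injective (injective_abelianization_centerEmbedding_inl hij) f₁
  obtain ⟨χ₂, hχ₂⟩ :=
    MonoidHom.exists_comp_eq_of_injective (injective_abelianization_centerEmbedding_inr hij) f₂
  obtain ⟨φ₁, hφ₁, cover₁, inter₁⟩ := exists_embedding (fst_surjective i)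
    ((ker_twist_inr hf₁ (χ := χ₂.comp Abelianization.of) (DFunLike.congr_fun hχ₂)).trans
      (ker_fst i).symm) (comap_fst_center i)
  obtain ⟨φ₂, hφ₂, cover₂, inter₂⟩ := exists_embedding (snd_surjective i)
    ((ker_twist_inl hf₂ (χ := χ₁.comp Abelianization.of) (DFunLike.congr_fun hχ₁)).trans
      (ker_snd i).symm) (comap_snd_center i)
  exact ⟨{
    r := r₁ + r₂
    Ghat := CentralPushout (f₁.prodMap f₂) (centerEmbedding i)
    T := (inl _ _).range
    T_central := by
      rintro _ ⟨t, rfl⟩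
      exact inl_mem_center _ _ t
    T_torus := (MonoidHom.ofInjective (inl_injective _ _ (centerEmbedding_injective i))).symm.trans
      (MulEquiv.finAppend ℂˣ r₁ r₂)
    φ₁, φ₁_inj := hφ₁, φ₂, φ₂_inj := hφ₂, cover₁, cover₂, inter₁, inter₂ }⟩
end

section
/- Let Ĝ be a group and let H1 and H2 be subgroups of Ĝ such that Ĝ = Z(Ĝ)·H1 = Z(Ĝ)·H2, i.e. every element of Ĝ is a product of a central element of Ĝ and an element of H_k, for k = 1, 2. Then H1 and H2 are isoclinic. (In particular, if two groups are toroidally related—both embed into a common group Ĝ as subgroups H1, H2 with a central subgroup T ≤ Z(Ĝ) satisfying Ĝ = T·H1 = T·H2—then they are isoclinic.) -/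
open scoped commutatorElement

/-!
If `Ĝ = Z(Ĝ) · H`, then an element of `H` is central in `H` exactly when it is central in `Ĝ`,
so `H ⧸ Z(H) ≃* Ĝ ⧸ Z(Ĝ)`; and since commutators ignore central factors, `[H, H] = [Ĝ, Ĝ]`
with the commutator map of `H` the restriction of that of `Ĝ`. Hence each `Hₖ` is isoclinic
to `Ĝ`, and isoclinism is symmetric and transitive.
-/

theorem commutatorElement_mem_commutator {G : Type*} [Group G] (x y : G) :
    ⁅x, y⁆ ∈ commutator G :=
  Subgroup.commutator_mem_commutator (Subgroup.mem_top x) (Subgroup.mem_top y)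

namespace IsIsoclinic

variable {G₁ G₂ G₃ : Type*} [Group G₁] [Group G₂] [Group G₃]

theorem symm (h : IsIsoclinic G₁ G₂) : IsIsoclinic G₂ G₁ := by
  obtain ⟨i, j, hij⟩ := h
  refine ⟨i.symm, j.symm, fun x' y' x y hx hy => ?_⟩
  have hxy : j ⟨⁅x, y⁆, commutatorElement_mem_commutator x y⟩ =
      ⟨⁅x', y'⁆, commutatorElement_mem_commutator x' y'⟩ :=
    Subtype.ext <| hij x y x' y' (by rw [hx, i.apply_symm_apply]) (by rw [hy, i.apply_symm_apply])
  rw [← hxy, j.symm_apply_apply]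

theorem trans (h₁₂ : IsIsoclinic G₁ G₂) (h₂₃ : IsIsoclinic G₂ G₃) : IsIsoclinic G₁ G₃ := by
  obtain ⟨i, j, hij⟩ := h₁₂
  obtain ⟨i', j', hij'⟩ := h₂₃
  refine ⟨i.trans i', j.trans j', fun x y x'' y'' hx hy => ?_⟩
  obtain ⟨x', hx'⟩ := QuotientGroup.mk_surjective (i x)
  obtain ⟨y', hy'⟩ := QuotientGroup.mk_surjective (i y)
  have hxy : j ⟨⁅x, y⁆, commutatorElement_mem_commutator x y⟩ =
      ⟨⁅x', y'⁆, commutatorElement_mem_commutator x' y'⟩ :=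
    Subtype.ext (hij x y x' y' hx' hy')
  rw [MulEquiv.trans_apply, hxy]
  exact hij' x' y' x'' y'' (by rw [hx, MulEquiv.trans_apply, hx'])
    (by rw [hy, MulEquiv.trans_apply, hy'])

end IsIsoclinic

namespace Subgroup

variable {G : Type*} [Group G]

theorem commutatorElement_mul_central {a b z w : G} (hz : z ∈ center G) (hw : w ∈ center G) :
    ⁅a * z, b * w⁆ = ⁅a, b⁆ := by
  have hzc : ⁅z, b * w⁆ = 1 :=
    commutatorElement_eq_one_iff_mul_comm.mpr (mem_center_iff.mp hz _).symm
  have haw : ⁅a, w⁆ = 1 := commutatorElement_eq_one_iff_mul_comm.mpr (mem_center_iff.mp hw a)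
  rw [commutatorElement_mul_left_eq_conj_mul, hzc, commutatorElement_mul_right_eq_mul_conj, haw]
  group

theorem commutatorElement_eq_of_mk_eq {a a' b b' : G} (ha : (a : G ⧸ center G) = a')
    (hb : (b : G ⧸ center G) = b') : ⁅a, b⁆ = ⁅a', b'⁆ := by
  rw [QuotientGroup.eq] at ha hb
  rw [← commutatorElement_mul_central ha hb, mul_inv_cancel_left, mul_inv_cancel_left]

/-- `G = Z(G) · H`. -/
def SupplementsCenter (H : Subgroup G) : Prop :=
  ∀ g : G, ∃ z ∈ center G, ∃ h ∈ H, g = z * h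

namespace SupplementsCenter

variable {H : Subgroup G}

theorem mk_subtype_surjective (hH : H.SupplementsCenter) :
    Function.Surjective ((QuotientGroup.mk' (center G)).comp H.subtype) := by
  intro q
  obtain ⟨g, rfl⟩ := QuotientGroup.mk_surjective q
  obtain ⟨z, hz, h, hh, rfl⟩ := hH g
  refine ⟨⟨h, hh⟩, QuotientGroup.eq.mpr ?_⟩
  change h⁻¹ * (z * h) ∈ center G
  rwa [← Subgroup.mem_center_iff.mp hz h, inv_mul_cancel_left]

theorem mem_center_iff (hH : H.SupplementsCenter) {h : H} :
    h ∈ center H ↔ (h : G) ∈ center G := by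
  refine ⟨fun hc => Subgroup.mem_center_iff.mpr fun g => ?_, fun hc => ?_⟩
  · obtain ⟨z, hz, k, hk, rfl⟩ := hH g
    have hkh : k * h = h * k := congrArg Subtype.val (Subgroup.mem_center_iff.mp hc ⟨k, hk⟩)
    rw [mul_assoc, hkh, ← mul_assoc, ← Subgroup.mem_center_iff.mp hz, mul_assoc]
  · exact Subgroup.mem_center_iff.mpr fun k => Subtype.ext (Subgroup.mem_center_iff.mp hc k)

theorem ker_mk_subtype (hH : H.SupplementsCenter) :
    ((QuotientGroup.mk' (center G)).comp H.subtype).ker = center H := by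
  ext h
  simp [hH.mem_center_iff]

noncomputable def quotientCenterEquiv (hH : H.SupplementsCenter) :
    (H ⧸ center H) ≃* (G ⧸ center G) :=
  (QuotientGroup.quotientMulEquivOfEq hH.ker_mk_subtype.symm).trans
    (QuotientGroup.quotientKerEquivOfSurjective _ hH.mk_subtype_surjective)

@[simp]
theorem quotientCenterEquiv_mk (hH : H.SupplementsCenter) (h : H) :
    hH.quotientCenterEquiv (h : H ⧸ center H) = ((h : G) : G ⧸ center G) :=
  rfl

theorem commutator_eq (hH : H.SupplementsCenter) : ⁅H, H⁆ = _root_.commutator G := by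
  refine le_antisymm (commutator_mono le_top le_top) (commutator_le.mpr fun g _ g' _ => ?_)
  obtain ⟨z, hz, k, hk, rfl⟩ := hH g
  obtain ⟨z', hz', k', hk', rfl⟩ := hH g'
  rw [← Subgroup.mem_center_iff.mp hz, ← Subgroup.mem_center_iff.mp hz',
    commutatorElement_mul_central hz hz']
  exact commutator_mem_commutator hk hk'

noncomputable def commutatorEquiv (hH : H.SupplementsCenter) :
    _root_.commutator H ≃* _root_.commutator G :=
  ((_root_.commutator H).equivMapOfInjective H.subtype H.subtype_injective).trans
    (MulEquiv.subgroupCongr (H.map_subtype_commutator.trans hH.commutator_eq))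

theorem isIsoclinic (hH : H.SupplementsCenter) : IsIsoclinic H G := by
  refine ⟨hH.quotientCenterEquiv, hH.commutatorEquiv, fun x y x' y' hx hy => ?_⟩
  rw [quotientCenterEquiv_mk] at hx hy
  exact commutatorElement_eq_of_mk_eq hx.symm hy.symm

end SupplementsCenter

end Subgroup

/-- Let `Ĝ` be a group and `H₁`, `H₂` subgroups of `Ĝ` such that
`Ĝ = Z(Ĝ)·H₁ = Z(Ĝ)·H₂`, i.e. every element of `Ĝ` is the product of a central element
and an element of `H_k`, for `k = 1, 2`.  Then `H₁` and `H₂` are isoclinic.  (In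
particular, toroidally related groups are isoclinic.) -/
theorem isoclinic_of_central_covers
    (Ghat : Type*) [Group Ghat] (H₁ H₂ : Subgroup Ghat)
    (h₁ : ∀ g : Ghat, ∃ z ∈ Subgroup.center Ghat, ∃ h ∈ H₁, g = z * h)
    (h₂ : ∀ g : Ghat, ∃ z ∈ Subgroup.center Ghat, ∃ h ∈ H₂, g = z * h) :
    IsIsoclinic ↥H₁ ↥H₂ :=
  (Subgroup.SupplementsCenter.isIsoclinic h₁).trans
    (Subgroup.SupplementsCenter.isIsoclinic h₂).symm
end

section
/- Let (i,j) be an isoclinism between groups G1 (with center Z1) and G2 (with center Z2), and let G12 = {(g1, g2) ∈ G1 × G2 : i(g1 Z1) = g2 Z2} be the fiber product. Then the commutator subgroup of G12 is the graph of j on commutators: [G12, G12] = {(c, j(c)) : c ∈ [G1, G1]}. -/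
/-- The fiber product `G₁₂ = {(g₁,g₂) : i(g₁Z₁) = g₂Z₂}` associated to an isomorphism
`i : G₁/Z(G₁) ≃ G₂/Z(G₂)`. -/
def fiberProduct {G₁ G₂ : Type*} [Group G₁] [Group G₂]
    (i : (G₁ ⧸ Subgroup.center G₁) ≃* (G₂ ⧸ Subgroup.center G₂)) :
    Subgroup (G₁ × G₂) where
  carrier := {g | i (QuotientGroup.mk g.1) = QuotientGroup.mk g.2}
  one_mem' := by simp
  mul_mem' := by
    intro a b ha hb
    simp only [Set.mem_setOf_eq] at *
    rw [Prod.fst_mul, Prod.snd_mul, QuotientGroup.mk_mul, QuotientGroup.mk_mul,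
      map_mul, ha, hb]
  inv_mem' := by
    intro a ha
    simp only [Set.mem_setOf_eq] at *
    rw [Prod.fst_inv, Prod.snd_inv, QuotientGroup.mk_inv, QuotientGroup.mk_inv,
      map_inv, ha]

open scoped commutatorElement

/-! The commutator of two elements `(x, x')`, `(y, y')` of the fiber product is
`(⁅x, y⁆, ⁅x', y'⁆) = (⁅x, y⁆, j ⁅x, y⁆)`, so `⁅G₁₂, G₁₂⁆` lies in the graph of `j`.
Conversely every `x ∈ G₁` lifts to `G₁₂` because `G₂ → G₂/Z₂` is onto, so every generator
`(⁅x, y⁆, j ⁅x, y⁆)` of the graph is such a commutator. -/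

def commutatorGraph {G₁ G₂ : Type*} [Group G₁] [Group G₂]
    (j : commutator G₁ ≃* commutator G₂) : commutator G₁ →* G₁ × G₂ :=
  (commutator G₁).subtype.prod ((commutator G₂).subtype.comp j.toMonoidHom)

theorem closure_preimage_commutatorSet_eq_top (G : Type*) [Group G] :
    Subgroup.closure ((commutator G).subtype ⁻¹' commutatorSet G) = ⊤ := by
  -- `commutator G` equals `closure (commutatorSet G)` only propositionally, and the statement
  -- depends on it through the subtype, so we generalize before substituting.
  suffices ∀ K : Subgroup G, K = Subgroup.closure (commutatorSet G) →
      Subgroup.closure (K.subtype ⁻¹' commutatorSet G) = ⊤ from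
    this _ (commutator_eq_closure G)
  rintro _ rfl
  exact Subgroup.closure_preimage_eq_top _

section Isoclinism

variable {G₁ G₂ : Type*} [Group G₁] [Group G₂]
  {i : (G₁ ⧸ Subgroup.center G₁) ≃* (G₂ ⧸ Subgroup.center G₂)}
  {j : commutator G₁ ≃* commutator G₂}

variable (i j) in
def IsIsoclinism : Prop :=
  ∀ (x y : G₁) (x' y' : G₂),
    (QuotientGroup.mk x' : G₂ ⧸ Subgroup.center G₂) = i (QuotientGroup.mk x) →
    (QuotientGroup.mk y' : G₂ ⧸ Subgroup.center G₂) = i (QuotientGroup.mk y) →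
    (j ⟨⁅x, y⁆, Subgroup.commutator_mem_commutator (Subgroup.mem_top x)
        (Subgroup.mem_top y)⟩ : G₂) = ⁅x', y'⁆

variable (i) in
theorem exists_mk_mem_fiberProduct (x : G₁) : ∃ y : G₂, (x, y) ∈ fiberProduct i := by
  obtain ⟨y, hy⟩ := QuotientGroup.mk_surjective (i (QuotientGroup.mk x))
  exact ⟨y, hy.symm⟩

theorem IsIsoclinism.commutatorGraph_commutatorElement (hij : IsIsoclinism i j)
    {p q : G₁ × G₂} (hp : p ∈ fiberProduct i) (hq : q ∈ fiberProduct i) :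
    commutatorGraph j ⟨⁅p.1, q.1⁆, Subgroup.commutator_mem_commutator (Subgroup.mem_top p.1)
      (Subgroup.mem_top q.1)⟩ = ⁅p, q⁆ :=
  Prod.ext rfl (hij _ _ _ _ hp.symm hq.symm)

theorem IsIsoclinism.commutator_fiberProduct_eq_range (hij : IsIsoclinism i j) :
    ⁅fiberProduct i, fiberProduct i⁆ = (commutatorGraph j).range := by
  apply le_antisymm
  · rw [Subgroup.commutator_le]
    intro p hp q hq
    exact ⟨_, hij.commutatorGraph_commutatorElement hp hq⟩
  · rw [MonoidHom.range_eq_map, ← closure_preimage_commutatorSet_eq_top, MonoidHom.map_closure,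
      Subgroup.closure_le]
    rintro _ ⟨c, ⟨x, y, hxy⟩, rfl⟩
    obtain ⟨x', hx'⟩ := exists_mk_mem_fiberProduct i x
    obtain ⟨y', hy'⟩ := exists_mk_mem_fiberProduct i y
    obtain rfl : c = ⟨⁅x, y⁆, Subgroup.commutator_mem_commutator (Subgroup.mem_top x)
        (Subgroup.mem_top y)⟩ := Subtype.ext hxy.symm
    rw [hij.commutatorGraph_commutatorElement hx' hy']
    exact Subgroup.commutator_mem_commutator hx' hy'

end Isoclinism

/-- Let `(i,j)` be an isoclinism between groups `G₁` (with center `Z₁`)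
and `G₂` (with center `Z₂`), and let `G₁₂ = {(g₁,g₂) ∈ G₁ × G₂ : i(g₁Z₁) = g₂Z₂}` be the
fiber product.  Then the commutator subgroup of `G₁₂` is the graph of `j` on
commutators: `[G₁₂,G₁₂] = {(c, j(c)) : c ∈ [G₁,G₁]}`. -/
theorem commutator_fiberProduct_eq_graph
    (G₁ G₂ : Type*) [Group G₁] [Group G₂]
    (i : (G₁ ⧸ Subgroup.center G₁) ≃* (G₂ ⧸ Subgroup.center G₂))
    (j : commutator G₁ ≃* commutator G₂)
    (hij : ∀ (x y : G₁) (x' y' : G₂),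
      (QuotientGroup.mk x' : G₂ ⧸ Subgroup.center G₂) = i (QuotientGroup.mk x) →
      (QuotientGroup.mk y' : G₂ ⧸ Subgroup.center G₂) = i (QuotientGroup.mk y) →
      (j ⟨⁅x, y⁆, Subgroup.commutator_mem_commutator (Subgroup.mem_top x)
          (Subgroup.mem_top y)⟩ : G₂) = ⁅x', y'⁆) :
    ∀ g : G₁ × G₂, g ∈ ⁅fiberProduct i, fiberProduct i⁆ ↔
      ∃ c : commutator G₁, g = ((c : G₁), (j c : G₂)) := by
  intro g
  rw [IsIsoclinism.commutator_fiberProduct_eq_range hij, MonoidHom.mem_range]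
  exact exists_congr fun _ => eq_comm
end

section
/- Let (i,j) be an isoclinism between groups G1 (with center Z1) and G2 (with center Z2), and let G12 = {(g1, g2) ∈ G1 × G2 : i(g1 Z1) = g2 Z2} be the fiber product. Then [G12, G12] ∩ (Z1 × {1}) = {(1,1)} and [G12, G12] ∩ ({1} × Z2) = {(1,1)}; consequently the homomorphisms Z1 → G12/[G12,G12], z ↦ (z,1)·[G12,G12], and Z2 → G12/[G12,G12], z ↦ (1,z)·[G12,G12], are injective. -/
open scoped commutatorElement

namespace MonoidHom

variable {G₁ G₂ : Type*} [Group G₁] [Group G₂] {H₁ : Subgroup G₁} {H₂ : Subgroup G₂}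

def subgroupGraph (φ : H₁ →* H₂) : Subgroup (G₁ × G₂) :=
  φ.graph.map (H₁.subtype.prodMap H₂.subtype)

theorem mem_subgroupGraph {φ : H₁ →* H₂} {p : G₁ × G₂} :
    p ∈ φ.subgroupGraph ↔ ∃ h : p.1 ∈ H₁, (φ ⟨p.1, h⟩ : G₂) = p.2 := by
  simp [subgroupGraph, mem_graph, Prod.ext_iff]

theorem eq_one_of_mk_one_mem_subgroupGraph {φ : H₁ →* H₂} (hφ : Function.Injective φ)
    {a : G₁} (ha : ((a, 1) : G₁ × G₂) ∈ φ.subgroupGraph) : a = 1 := by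
  obtain ⟨haH, hφa⟩ := mem_subgroupGraph.mp ha
  have : (⟨a, haH⟩ : H₁) = 1 := hφ (Subtype.ext (by simpa using hφa))
  exact congrArg Subtype.val this

theorem eq_one_of_one_mk_mem_subgroupGraph {φ : H₁ →* H₂} {b : G₂}
    (hb : ((1, b) : G₁ × G₂) ∈ φ.subgroupGraph) : b = 1 := by
  obtain ⟨h₁, hφb⟩ := mem_subgroupGraph.mp hb
  rw [← show (φ ⟨1, h₁⟩ : G₂) = b from hφb, show (⟨1, h₁⟩ : H₁) = 1 from rfl, map_one,
    OneMemClass.coe_one]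

end MonoidHom

theorem commutator_fiberProduct_le_subgroupGraph {G₁ G₂ : Type*} [Group G₁] [Group G₂]
    {i : (G₁ ⧸ Subgroup.center G₁) ≃* (G₂ ⧸ Subgroup.center G₂)}
    {j : commutator G₁ ≃* commutator G₂}
    (hij : ∀ (x y : G₁) (x' y' : G₂),
      (QuotientGroup.mk x' : G₂ ⧸ Subgroup.center G₂) = i (QuotientGroup.mk x) →
      (QuotientGroup.mk y' : G₂ ⧸ Subgroup.center G₂) = i (QuotientGroup.mk y) →
      (j ⟨⁅x, y⁆, Subgroup.commutator_mem_commutator (Subgroup.mem_top x)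
          (Subgroup.mem_top y)⟩ : G₂) = ⁅x', y'⁆) :
    ⁅fiberProduct i, fiberProduct i⁆ ≤ j.toMonoidHom.subgroupGraph := by
  rw [Subgroup.commutator_le]
  rintro ⟨a₁, a₂⟩ ha ⟨b₁, b₂⟩ hb
  exact MonoidHom.mem_subgroupGraph.mpr
    ⟨Subgroup.commutator_mem_commutator (Subgroup.mem_top a₁) (Subgroup.mem_top b₁),
      hij a₁ b₁ a₂ b₂ ha.symm hb.symm⟩

/-- Let `(i,j)` be an isoclinism between groups `G₁` (with center `Z₁`)
and `G₂` (with center `Z₂`), and let `G₁₂` be the fiber product.  Then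
`[G₁₂,G₁₂] ∩ (Z₁ × {1}) = {(1,1)}` and `[G₁₂,G₁₂] ∩ ({1} × Z₂) = {(1,1)}`; consequently
the homomorphisms `Z₁ → G₁₂/[G₁₂,G₁₂]`, `z ↦ (z,1)·[G₁₂,G₁₂]`, and
`Z₂ → G₁₂/[G₁₂,G₁₂]`, `z ↦ (1,z)·[G₁₂,G₁₂]`, are injective. -/
theorem commutator_fiberProduct_meets_centers_trivially
    (G₁ G₂ : Type*) [Group G₁] [Group G₂]
    (i : (G₁ ⧸ Subgroup.center G₁) ≃* (G₂ ⧸ Subgroup.center G₂))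
    (j : commutator G₁ ≃* commutator G₂)
    (hij : ∀ (x y : G₁) (x' y' : G₂),
      (QuotientGroup.mk x' : G₂ ⧸ Subgroup.center G₂) = i (QuotientGroup.mk x) →
      (QuotientGroup.mk y' : G₂ ⧸ Subgroup.center G₂) = i (QuotientGroup.mk y) →
      (j ⟨⁅x, y⁆, Subgroup.commutator_mem_commutator (Subgroup.mem_top x)
          (Subgroup.mem_top y)⟩ : G₂) = ⁅x', y'⁆) :
    -- `[G₁₂,G₁₂] ∩ (Z₁ × {1}) = {(1,1)}`
    (∀ z ∈ Subgroup.center G₁,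
      ((z, 1) : G₁ × G₂) ∈ ⁅fiberProduct i, fiberProduct i⁆ → z = 1) ∧
    -- `[G₁₂,G₁₂] ∩ ({1} × Z₂) = {(1,1)}`
    (∀ z ∈ Subgroup.center G₂,
      ((1, z) : G₁ × G₂) ∈ ⁅fiberProduct i, fiberProduct i⁆ → z = 1) ∧
    -- `z ↦ (z,1)·[G₁₂,G₁₂]` is injective on `Z₁`
    (∀ z ∈ Subgroup.center G₁, ∀ w ∈ Subgroup.center G₁,
      ((z, 1) : G₁ × G₂) * ((w, 1) : G₁ × G₂)⁻¹ ∈ ⁅fiberProduct i, fiberProduct i⁆ →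
        z = w) ∧
    -- `z ↦ (1,z)·[G₁₂,G₁₂]` is injective on `Z₂`
    (∀ z ∈ Subgroup.center G₂, ∀ w ∈ Subgroup.center G₂,
      ((1, z) : G₁ × G₂) * ((1, w) : G₁ × G₂)⁻¹ ∈ ⁅fiberProduct i, fiberProduct i⁆ →
        z = w) := by
  have hle := commutator_fiberProduct_le_subgroupGraph hij
  have h₁ : ∀ z : G₁, ((z, 1) : G₁ × G₂) ∈ ⁅fiberProduct i, fiberProduct i⁆ → z = 1 :=
    fun z hz ↦ MonoidHom.eq_one_of_mk_one_mem_subgroupGraph j.injective (hle hz)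
  have h₂ : ∀ z : G₂, ((1, z) : G₁ × G₂) ∈ ⁅fiberProduct i, fiberProduct i⁆ → z = 1 :=
    fun z hz ↦ MonoidHom.eq_one_of_one_mk_mem_subgroupGraph (hle hz)
  refine ⟨fun z _ ↦ h₁ z, fun z _ ↦ h₂ z, fun z _ w _ h ↦ ?_, fun z _ w _ h ↦ ?_⟩
  · exact mul_inv_eq_one.mp (h₁ _ (by simpa using h))
  · exact mul_inv_eq_one.mp (h₂ _ (by simpa using h))
end

section
/- Let (i,j) be an isoclinism between groups G1 (with center Z1) and G2 (with center Z2). Let H1 be a subgroup of G1 containing Z1, and let H2 be the preimage under the quotient map G2 → G2/Z2 of the image i(H1/Z1). Then H2 is a subgroup of G2 containing Z2, and H1 and H2 are isoclinic. -/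
/-!
The pairs `(h, h') ∈ H₁ × H₂` whose classes modulo the centres correspond under `i` form a
subgroup of `H₁ × H₂` that projects onto both factors, and `j` sends `⁅h, k⁆` to `⁅h', k'⁆` for
any two such pairs. Every correspondence with these properties is an isoclinism. Since an
element is central iff all its commutators are trivial, `h ∈ Z(H₁) ↔ h' ∈ Z(H₂)`, so the
correspondence induces `H₁ ⧸ Z(H₁) ≃* H₂ ⧸ Z(H₂)`; and `j` restricts to
`⁅H₁, H₁⁆ ≃* ⁅H₂, H₂⁆` because it maps the generating commutators of one onto those of the other.
-/

open scoped commutatorElement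

section CentralMultiples

variable {G : Type*} [Group G]

theorem commutatorElement_mul_left_of_mem_center {z : G} (hz : z ∈ Subgroup.center G)
    (a b : G) : ⁅a * z, b⁆ = ⁅a, b⁆ := by
  rw [commutatorElement_mul_left_eq_conj_mul,
    commutatorElement_eq_one_iff_commute.mpr (Subgroup.mem_center_iff.mp hz b).symm]
  group

theorem commutatorElement_mul_right_of_mem_center {z : G} (hz : z ∈ Subgroup.center G)
    (a b : G) : ⁅a, b * z⁆ = ⁅a, b⁆ := by
  rw [commutatorElement_mul_right_eq_mul_conj,
    commutatorElement_eq_one_iff_commute.mpr (Subgroup.mem_center_iff.mp hz a)]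
  group

theorem commutatorElement_eq_of_mk_center_eq {a a' b b' : G}
    (ha : (a : G ⧸ Subgroup.center G) = a') (hb : (b : G ⧸ Subgroup.center G) = b') :
    ⁅a, b⁆ = ⁅a', b'⁆ := by
  obtain ⟨z, hz, rfl⟩ : ∃ z ∈ Subgroup.center G, a' = a * z :=
    ⟨a⁻¹ * a', QuotientGroup.eq.mp ha, by group⟩
  obtain ⟨w, hw, rfl⟩ : ∃ w ∈ Subgroup.center G, b' = b * w :=
    ⟨b⁻¹ * b', QuotientGroup.eq.mp hb, by group⟩
  rw [commutatorElement_mul_left_of_mem_center hz, commutatorElement_mul_right_of_mem_center hw]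

end CentralMultiples

section Correspondence

variable {A B : Type*} [Group A] [Group B] {R : Subgroup (A × B)}
  {j : commutator A ≃* commutator B}

theorem exists_quotientEquiv_of_correspondence (N : Subgroup A) (M : Subgroup B)
    [N.Normal] [M.Normal] (hA : ∀ a, ∃ b, (a, b) ∈ R) (hB : ∀ b, ∃ a, (a, b) ∈ R)
    (hNM : ∀ a b, (a, b) ∈ R → (a ∈ N ↔ b ∈ M)) :
    ∃ e : A ⧸ N ≃* B ⧸ M, ∀ a b, (a, b) ∈ R → e a = b := by
  let π₁ : R →* A ⧸ N := (QuotientGroup.mk' N).comp ((MonoidHom.fst A B).comp R.subtype)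
  let π₂ : R →* B ⧸ M := (QuotientGroup.mk' M).comp ((MonoidHom.snd A B).comp R.subtype)
  have hπ₁ : Function.Surjective π₁ := by
    rintro ⟨a⟩
    obtain ⟨b, hab⟩ := hA a
    exact ⟨⟨(a, b), hab⟩, rfl⟩
  have hπ₂ : Function.Surjective π₂ := by
    rintro ⟨b⟩
    obtain ⟨a, hab⟩ := hB b
    exact ⟨⟨(a, b), hab⟩, rfl⟩
  have hker : π₁.ker = π₂.ker := by
    ext ⟨⟨a, b⟩, hab⟩
    simpa [π₁, π₂] using hNM a b hab
  refine ⟨(QuotientGroup.quotientKerEquivOfSurjective π₁ hπ₁).symm.trans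
    ((QuotientGroup.quotientMulEquivOfEq hker).trans
      (QuotientGroup.quotientKerEquivOfSurjective π₂ hπ₂)), fun a b hab => ?_⟩
  have : (QuotientGroup.quotientKerEquivOfSurjective π₁ hπ₁).symm a = (⟨(a, b), hab⟩ : R) :=
    (MulEquiv.symm_apply_eq _).mpr rfl
  rw [MulEquiv.trans_apply, MulEquiv.trans_apply, this]
  rfl

theorem mem_center_iff_of_correspondence
    (hA : ∀ a, ∃ b, (a, b) ∈ R) (hB : ∀ b, ∃ a, (a, b) ∈ R)
    (hj : ∀ a b c d, (a, b) ∈ R → (c, d) ∈ R →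
      (j ⟨⁅a, c⁆, Subgroup.commutator_mem_commutator (Subgroup.mem_top a)
        (Subgroup.mem_top c)⟩ : B) = ⁅b, d⁆)
    {a : A} {b : B} (hab : (a, b) ∈ R) :
    a ∈ Subgroup.center A ↔ b ∈ Subgroup.center B := by
  simp only [Subgroup.mem_center_iff, eq_comm (a := _ * a), eq_comm (a := _ * b),
    ← commutatorElement_eq_one_iff_mul_comm]
  refine ⟨fun ha d => ?_, fun hb c => ?_⟩
  · obtain ⟨c, hcd⟩ := hB d
    rw [← hj a b c d hab hcd]
    simp [ha c]
  · obtain ⟨d, hcd⟩ := hA c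
    have := hj a b c d hab hcd
    rw [hb d, OneMemClass.coe_eq_one, MulEquiv.map_eq_one_iff] at this
    exact congrArg Subtype.val this

theorem isIsoclinic_of_correspondence
    (hA : ∀ a, ∃ b, (a, b) ∈ R) (hB : ∀ b, ∃ a, (a, b) ∈ R)
    (hj : ∀ a b c d, (a, b) ∈ R → (c, d) ∈ R →
      (j ⟨⁅a, c⁆, Subgroup.commutator_mem_commutator (Subgroup.mem_top a)
        (Subgroup.mem_top c)⟩ : B) = ⁅b, d⁆) :
    IsIsoclinic A B := by
  obtain ⟨e, he⟩ := exists_quotientEquiv_of_correspondence _ _ hA hB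
    fun _ _ hab => mem_center_iff_of_correspondence hA hB hj hab
  refine ⟨e, j, fun x y x' y' hx hy => ?_⟩
  obtain ⟨b, hxb⟩ := hA x
  obtain ⟨d, hyd⟩ := hA y
  rw [hj x b y d hxb hyd]
  exact commutatorElement_eq_of_mk_center_eq ((he x b hxb).symm.trans hx.symm)
    ((he y d hyd).symm.trans hy.symm)

end Correspondence

section SubgroupCommutators

variable {G₁ G₂ : Type*} [Group G₁] [Group G₂] {H₁ : Subgroup G₁} {H₂ : Subgroup G₂}

theorem mem_commutator_iff_coe_mem {G : Type*} [Group G] {H : Subgroup G} (x : H) :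
    x ∈ commutator H ↔ (x : G) ∈ ⁅H, H⁆ := by
  rw [← H.map_subtype_commutator]
  exact (Subgroup.mem_map_iff_mem H.subtype_injective).symm

theorem coe_mem_commutator_of_mem_commutator {G : Type*} [Group G] {H : Subgroup G} (x : H)
    (hx : x ∈ commutator H) : (x : G) ∈ commutator G :=
  Subgroup.commutator_mono le_top le_top ((mem_commutator_iff_coe_mem x).mp hx)

theorem coe_apply_mem_commutator_of_correspondence (j : commutator G₁ ≃* commutator G₂)
    (R : Set (H₁ × H₂)) (hA : ∀ a, ∃ b, (a, b) ∈ R)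
    (hj : ∀ a b c d, (a, b) ∈ R → (c, d) ∈ R →
      j ⟨⁅(a : G₁), c⁆, Subgroup.commutator_mem_commutator (Subgroup.mem_top _)
        (Subgroup.mem_top _)⟩ =
        ⟨⁅(b : G₂), d⁆, Subgroup.commutator_mem_commutator (Subgroup.mem_top _)
          (Subgroup.mem_top _)⟩)
    {x : commutator G₁} (hx : (x : G₁) ∈ ⁅H₁, H₁⁆) : (j x : G₂) ∈ ⁅H₂, H₂⁆ := by
  have hle : ⁅H₁, H₁⁆ ≤ (⁅H₂, H₂⁆.comap ((commutator G₂).subtype.comp j.toMonoidHom)).map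
      (commutator G₁).subtype := by
    rw [Subgroup.commutator_le]
    intro a ha c hc
    obtain ⟨b, hab⟩ := hA ⟨a, ha⟩
    obtain ⟨d, hcd⟩ := hA ⟨c, hc⟩
    refine ⟨⟨⁅a, c⁆, Subgroup.commutator_mem_commutator (Subgroup.mem_top _)
      (Subgroup.mem_top _)⟩, ?_, rfl⟩
    simpa [hj _ _ _ _ hab hcd] using Subgroup.commutator_mem_commutator b.2 d.2
  obtain ⟨y, hy, hyx⟩ := hle hx
  rwa [← Subtype.ext hyx]

def MulEquiv.restrictCommutator (j : commutator G₁ ≃* commutator G₂)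
    (h : ∀ x : commutator G₁, (x : G₁) ∈ ⁅H₁, H₁⁆ ↔ (j x : G₂) ∈ ⁅H₂, H₂⁆) :
    commutator H₁ ≃* commutator H₂ where
  toFun x := ⟨⟨j ⟨x, coe_mem_commutator_of_mem_commutator _ x.2⟩,
      H₂.commutator_le_self ((h _).mp ((mem_commutator_iff_coe_mem _).mp x.2))⟩,
    (mem_commutator_iff_coe_mem _).mpr ((h _).mp ((mem_commutator_iff_coe_mem _).mp x.2))⟩
  invFun y := ⟨⟨j.symm ⟨y, coe_mem_commutator_of_mem_commutator _ y.2⟩,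
      H₁.commutator_le_self ((h _).mpr (by simpa using (mem_commutator_iff_coe_mem _).mp y.2))⟩,
    (mem_commutator_iff_coe_mem _).mpr
      ((h _).mpr (by simpa using (mem_commutator_iff_coe_mem _).mp y.2))⟩
  left_inv x := by ext; simp
  right_inv y := by ext; simp
  map_mul' x y := by
    ext
    simpa using congrArg Subtype.val (map_mul j ⟨_, coe_mem_commutator_of_mem_commutator _ x.2⟩
      ⟨_, coe_mem_commutator_of_mem_commutator _ y.2⟩)

theorem MulEquiv.coe_restrictCommutator_apply (j : commutator G₁ ≃* commutator G₂)
    (h : ∀ x : commutator G₁, (x : G₁) ∈ ⁅H₁, H₁⁆ ↔ (j x : G₂) ∈ ⁅H₂, H₂⁆)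
    (x : commutator H₁) :
    ((j.restrictCommutator h x : H₂) : G₂) =
      j ⟨x, coe_mem_commutator_of_mem_commutator _ x.2⟩ :=
  rfl

theorem exists_commutatorEquiv_of_correspondence (j : commutator G₁ ≃* commutator G₂)
    (R : Set (H₁ × H₂)) (hA : ∀ a, ∃ b, (a, b) ∈ R) (hB : ∀ b, ∃ a, (a, b) ∈ R)
    (hj : ∀ a b c d, (a, b) ∈ R → (c, d) ∈ R →
      j ⟨⁅(a : G₁), c⁆, Subgroup.commutator_mem_commutator (Subgroup.mem_top _)
        (Subgroup.mem_top _)⟩ =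
        ⟨⁅(b : G₂), d⁆, Subgroup.commutator_mem_commutator (Subgroup.mem_top _)
          (Subgroup.mem_top _)⟩) :
    ∃ J : commutator H₁ ≃* commutator H₂, ∀ a b c d, (a, b) ∈ R → (c, d) ∈ R →
      (J ⟨⁅a, c⁆, Subgroup.commutator_mem_commutator (Subgroup.mem_top a)
        (Subgroup.mem_top c)⟩ : H₂) = ⁅b, d⁆ := by
  have hmem (x : commutator G₁) : (x : G₁) ∈ ⁅H₁, H₁⁆ ↔ (j x : G₂) ∈ ⁅H₂, H₂⁆ := by
    refine ⟨coe_apply_mem_commutator_of_correspondence j R hA hj, fun hx => ?_⟩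
    simpa using coe_apply_mem_commutator_of_correspondence j.symm (Prod.swap ⁻¹' R) hB
      (fun b a d c hab hcd => (MulEquiv.symm_apply_eq j).mpr (hj a b c d hab hcd).symm) hx
  refine ⟨j.restrictCommutator hmem, fun a b c d hab hcd => Subtype.ext ?_⟩
  rw [MulEquiv.coe_restrictCommutator_apply]
  exact congrArg Subtype.val (hj a b c d hab hcd)

end SubgroupCommutators

section Isoclinism

variable {G₁ G₂ : Type*} [Group G₁] [Group G₂]
  (i : (G₁ ⧸ Subgroup.center G₁) ≃* (G₂ ⧸ Subgroup.center G₂))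

def quotientCenterGraph (H₁ : Subgroup G₁) (H₂ : Subgroup G₂) : Subgroup (H₁ × H₂) :=
  MonoidHom.eqLocus ((QuotientGroup.mk' _).comp (H₂.subtype.comp (MonoidHom.snd H₁ H₂)))
    ((i.toMonoidHom.comp (QuotientGroup.mk' _)).comp (H₁.subtype.comp (MonoidHom.fst H₁ H₂)))

theorem mem_quotientCenterGraph {H₁ : Subgroup G₁} {H₂ : Subgroup G₂} {a : H₁} {b : H₂} :
    (a, b) ∈ quotientCenterGraph i H₁ H₂ ↔
      ((b : G₂) : G₂ ⧸ Subgroup.center G₂) = i ((a : G₁) : G₁ ⧸ Subgroup.center G₁) :=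
  Iff.rfl

theorem mem_comap_map_map_iff {H₁ : Subgroup G₁} {x : G₂} :
    x ∈ Subgroup.comap (QuotientGroup.mk' (Subgroup.center G₂))
        (Subgroup.map i.toMonoidHom (Subgroup.map (QuotientGroup.mk' (Subgroup.center G₁)) H₁)) ↔
      ∃ a ∈ H₁, (x : G₂ ⧸ Subgroup.center G₂) = i a := by
  simp [eq_comm]

theorem center_le_comap_map_map (H₁ : Subgroup G₁) :
    Subgroup.center G₂ ≤ Subgroup.comap (QuotientGroup.mk' (Subgroup.center G₂))
        (Subgroup.map i.toMonoidHom (Subgroup.map (QuotientGroup.mk' (Subgroup.center G₁)) H₁)) :=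
  fun z hz => (mem_comap_map_map_iff i).mpr
    ⟨1, H₁.one_mem, by rw [(QuotientGroup.eq_one_iff z).mpr hz, QuotientGroup.mk_one, map_one]⟩

end Isoclinism

theorem corresponding_subgroups_isoclinic_general
    (G₁ G₂ : Type*) [Group G₁] [Group G₂]
    (i : (G₁ ⧸ Subgroup.center G₁) ≃* (G₂ ⧸ Subgroup.center G₂))
    (j : commutator G₁ ≃* commutator G₂)
    (hij : ∀ (x y : G₁) (x' y' : G₂),
      (QuotientGroup.mk x' : G₂ ⧸ Subgroup.center G₂) = i (QuotientGroup.mk x) →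
      (QuotientGroup.mk y' : G₂ ⧸ Subgroup.center G₂) = i (QuotientGroup.mk y) →
      (j ⟨⁅x, y⁆, Subgroup.commutator_mem_commutator (Subgroup.mem_top x)
          (Subgroup.mem_top y)⟩ : G₂) = ⁅x', y'⁆)
    (H₁ : Subgroup G₁) :
    Subgroup.center G₂ ≤
      Subgroup.comap (QuotientGroup.mk' (Subgroup.center G₂))
        (Subgroup.map i.toMonoidHom
          (Subgroup.map (QuotientGroup.mk' (Subgroup.center G₁)) H₁)) ∧
    IsIsoclinic ↥H₁
      ↥(Subgroup.comap (QuotientGroup.mk' (Subgroup.center G₂))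
        (Subgroup.map i.toMonoidHom
          (Subgroup.map (QuotientGroup.mk' (Subgroup.center G₁)) H₁))) := by
  set H₂ := Subgroup.comap (QuotientGroup.mk' (Subgroup.center G₂))
    (Subgroup.map i.toMonoidHom (Subgroup.map (QuotientGroup.mk' (Subgroup.center G₁)) H₁))
  have hA (a : H₁) : ∃ b : H₂, (a, b) ∈ quotientCenterGraph i H₁ H₂ := by
    obtain ⟨b, hb⟩ := QuotientGroup.mk_surjective (i a)
    exact ⟨⟨b, (mem_comap_map_map_iff i).mpr ⟨a, a.2, hb⟩⟩, (mem_quotientCenterGraph i).mpr hb⟩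
  have hB (b : H₂) : ∃ a : H₁, (a, b) ∈ quotientCenterGraph i H₁ H₂ := by
    obtain ⟨a, ha, hab⟩ := (mem_comap_map_map_iff i).mp b.2
    exact ⟨⟨a, ha⟩, (mem_quotientCenterGraph i).mpr hab⟩
  obtain ⟨J, hJ⟩ := exists_commutatorEquiv_of_correspondence j _ hA hB
    fun a b c d hab hcd => Subtype.ext <|
      hij a c b d ((mem_quotientCenterGraph i).mp hab) ((mem_quotientCenterGraph i).mp hcd)
  exact ⟨center_le_comap_map_map i H₁, isIsoclinic_of_correspondence hA hB hJ⟩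

/-- Let `(i,j)` be an isoclinism between groups `G₁` (with center `Z₁`)
and `G₂` (with center `Z₂`).  Let `H₁` be a subgroup of `G₁` containing `Z₁`, and let
`H₂` be the preimage under the quotient map `G₂ → G₂/Z₂` of the image `i(H₁/Z₁)`.  Then
`H₂` is a subgroup of `G₂` containing `Z₂`, and `H₁` and `H₂` are isoclinic. -/
theorem corresponding_subgroups_isoclinic
    (G₁ G₂ : Type*) [Group G₁] [Group G₂]
    (i : (G₁ ⧸ Subgroup.center G₁) ≃* (G₂ ⧸ Subgroup.center G₂))
    (j : commutator G₁ ≃* commutator G₂)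
    (hij : ∀ (x y : G₁) (x' y' : G₂),
      (QuotientGroup.mk x' : G₂ ⧸ Subgroup.center G₂) = i (QuotientGroup.mk x) →
      (QuotientGroup.mk y' : G₂ ⧸ Subgroup.center G₂) = i (QuotientGroup.mk y) →
      (j ⟨⁅x, y⁆, Subgroup.commutator_mem_commutator (Subgroup.mem_top x)
          (Subgroup.mem_top y)⟩ : G₂) = ⁅x', y'⁆)
    (H₁ : Subgroup G₁) (hH₁ : Subgroup.center G₁ ≤ H₁) :
    Subgroup.center G₂ ≤
      Subgroup.comap (QuotientGroup.mk' (Subgroup.center G₂))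
        (Subgroup.map i.toMonoidHom
          (Subgroup.map (QuotientGroup.mk' (Subgroup.center G₁)) H₁)) ∧
    IsIsoclinic ↥H₁
      ↥(Subgroup.comap (QuotientGroup.mk' (Subgroup.center G₂))
        (Subgroup.map i.toMonoidHom
          (Subgroup.map (QuotientGroup.mk' (Subgroup.center G₁)) H₁))) :=
  corresponding_subgroups_isoclinic_general G₁ G₂ i j hij H₁
end
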